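/- arXiv:1612.06373 — 8 statements merged into one kernel-verified Lean document; each statement's English description precedes it below -/
import Mathlib

section
/- There do not exist four real polynomials P₁, P₂, P₃, P₄ ∈ ℝ[x] and a real number ε > 0 such that P₁(x) < P₂(x) < P₃(x) < P₄(x) for all x with −ε < x < 0, and P₂(x) < P₄(x) < P₁(x) < P₃(x) for all x with 0 < x < ε. -/
/-!
Write `v p` for the order of vanishing of `p` at `0`. Factoring `p = X ^ m * q` with
`q(0) ≠ 0` shows that `p(-t) p(t)` has the sign of `(-1) ^ m` for small `t ≠ 0`, so `v (Pⱼ - Pᵢ)`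
is odd exactly for the pairs that swap: `v₁₂, v₁₄, v₃₄` are odd and `v₁₃, v₂₃, v₂₄` even.
Orders of vanishing are ultrametric: `v (r - q) = min (v (q - p)) (v (r - p))` whenever the two
differ. The triangle `P₁P₂P₃` then forces `v₁₃ < v₁₂`, the triangle `P₁P₃P₄` forces
`v₁₄ < v₁₃`, and the triangle `P₁P₂P₄` gives `v₂₄ = v₁₄`, odd and even at once.
-/

open Polynomial Filter Topology

namespace Polynomial

section CommRing

variable {R : Type*} [CommRing R]

theorem rootMultiplicity_sub_comm (p q : R[X]) (a : R) :
    (p - q).rootMultiplicity a = (q - p).rootMultiplicity a := by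
  rw [← neg_sub, rootMultiplicity_eq_natTrailingDegree, rootMultiplicity_eq_natTrailingDegree,
    neg_comp, natTrailingDegree_neg]

theorem rootMultiplicity_sub_eq_min_of_ne {p q r : R[X]} (a : R) (hq : q ≠ p) (hr : r ≠ p)
    (h : (q - p).rootMultiplicity a ≠ (r - p).rootMultiplicity a) :
    (r - q).rootMultiplicity a = min ((q - p).rootMultiplicity a) ((r - p).rootMultiplicity a) := by
  have hrq : r - q ≠ 0 := fun hrq ↦ h (by rw [sub_eq_zero.1 hrq])
  have h₁ := rootMultiplicity_add a (p := r - p) (q := p - q) (by rwa [sub_add_sub_cancel])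
  have h₂ := rootMultiplicity_add a (p := q - p) (q := r - q)
    (by rwa [sub_add_sub_cancel', sub_ne_zero])
  have h₃ := rootMultiplicity_add a (p := r - p) (q := q - r)
    (by rwa [sub_add_sub_cancel', sub_ne_zero])
  rw [sub_add_sub_cancel, rootMultiplicity_sub_comm p q] at h₁
  rw [sub_add_sub_cancel'] at h₂
  rw [sub_add_sub_cancel', rootMultiplicity_sub_comm q r] at h₃
  omega

end CommRing

theorem eventually_pos_neg_one_pow_rootMultiplicity_mul_eval_neg_mul_eval {p : ℝ[X]}
    (hp : p ≠ 0) :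
    ∀ᶠ t in 𝓝[≠] 0, 0 < (-1) ^ p.rootMultiplicity 0 * (p.eval (-t) * p.eval t) := by
  obtain ⟨q, hpq, hq⟩ := p.exists_eq_pow_rootMultiplicity_mul_and_not_dvd hp 0
  set m := p.rootMultiplicity 0
  have hq0 : 0 < q.eval (-0) * q.eval 0 := by
    simpa [mul_self_pos] using fun h ↦ hq (dvd_iff_isRoot.2 h)
  have hlim : Tendsto (fun t ↦ q.eval (-t) * q.eval t) (𝓝 0) (𝓝 (q.eval (-0) * q.eval 0)) :=
    ((q.continuous.comp continuous_neg).mul q.continuous).tendsto 0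
  filter_upwards [nhdsWithin_le_nhds (hlim.eventually_const_lt hq0), self_mem_nhdsWithin]
    with t hqt (ht : t ≠ 0)
  have : (-1) ^ m * (p.eval (-t) * p.eval t) = (t ^ m) ^ 2 * (q.eval (-t) * q.eval t) := by
    have hneg : (-1 : ℝ) ^ m * (-t) ^ m = t ^ m := by rw [← mul_pow, neg_one_mul, neg_neg]
    rw [hpq]
    simp only [eval_mul, eval_pow, eval_sub, eval_X, eval_C, sub_zero]
    linear_combination (t ^ m * q.eval (-t) * q.eval t) * hneg
  rw [this]
  positivity

theorem even_rootMultiplicity_sub_of_eventually_lt {p q : ℝ[X]}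
    (h : ∀ᶠ t in 𝓝[>] 0, p.eval (-t) < q.eval (-t) ∧ p.eval t < q.eval t) :
    Even ((q - p).rootMultiplicity 0) := by
  have hqp : q - p ≠ 0 := fun hqp ↦ by
    obtain ⟨t, -, ht⟩ := h.exists
    simp [sub_eq_zero.1 hqp] at ht
  obtain ⟨t, hsign, hneg, hpos⟩ :=
    (((eventually_pos_neg_one_pow_rootMultiplicity_mul_eval_neg_mul_eval hqp).filter_mono
      (nhdsGT_le_nhdsNE 0)).and h).exists
  refine (Nat.even_or_odd _).resolve_right fun hodd ↦ ?_
  rw [hodd.neg_one_pow, eval_sub, eval_sub] at hsign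
  nlinarith

theorem odd_rootMultiplicity_sub_of_eventually_lt_of_gt {p q : ℝ[X]}
    (h : ∀ᶠ t in 𝓝[>] 0, p.eval (-t) < q.eval (-t) ∧ q.eval t < p.eval t) :
    Odd ((q - p).rootMultiplicity 0) := by
  have hqp : q - p ≠ 0 := fun hqp ↦ by
    obtain ⟨t, -, ht⟩ := h.exists
    simp [sub_eq_zero.1 hqp] at ht
  obtain ⟨t, hsign, hneg, hpos⟩ :=
    (((eventually_pos_neg_one_pow_rootMultiplicity_mul_eval_neg_mul_eval hqp).filter_mono
      (nhdsGT_le_nhdsNE 0)).and h).exists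
  refine (Nat.even_or_odd _).resolve_left fun heven ↦ ?_
  rw [heven.neg_one_pow, eval_sub, eval_sub] at hsign
  nlinarith

end Polynomial

/-- Kontsevich's métro ticket theorem: four real polynomials cannot interchange
their order from `P₁ < P₂ < P₃ < P₄` (for small `x < 0`) to
`P₂ < P₄ < P₁ < P₃` (for small `x > 0`). -/
theorem no_kontsevich_interchange :
    ¬ ∃ (P₁ P₂ P₃ P₄ : Polynomial ℝ) (ε : ℝ), 0 < ε ∧
      (∀ x : ℝ, -ε < x → x < 0 →
        P₁.eval x < P₂.eval x ∧ P₂.eval x < P₃.eval x ∧ P₃.eval x < P₄.eval x) ∧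
      (∀ x : ℝ, 0 < x → x < ε →
        P₂.eval x < P₄.eval x ∧ P₄.eval x < P₁.eval x ∧ P₁.eval x < P₃.eval x) := by
  rintro ⟨P₁, P₂, P₃, P₄, ε, hε, hl, hr⟩
  have h : ∀ᶠ t in 𝓝[>] 0,
      (P₁.eval (-t) < P₂.eval (-t) ∧ P₂.eval (-t) < P₃.eval (-t) ∧ P₃.eval (-t) < P₄.eval (-t)) ∧
      (P₂.eval t < P₄.eval t ∧ P₄.eval t < P₁.eval t ∧ P₁.eval t < P₃.eval t) := by
    filter_upwards [Ioo_mem_nhdsGT hε] with t ⟨ht, htε⟩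
    exact ⟨hl (-t) (by linarith) (by linarith), hr t ht htε⟩
  have h₁₂ : Odd ((P₂ - P₁).rootMultiplicity 0) := odd_rootMultiplicity_sub_of_eventually_lt_of_gt
    (h.mono fun _ ⟨⟨_, _, _⟩, _, _, _⟩ ↦ ⟨by linarith, by linarith⟩)
  have h₁₃ : Even ((P₃ - P₁).rootMultiplicity 0) := even_rootMultiplicity_sub_of_eventually_lt
    (h.mono fun _ ⟨⟨_, _, _⟩, _, _, _⟩ ↦ ⟨by linarith, by linarith⟩)
  have h₁₄ : Odd ((P₄ - P₁).rootMultiplicity 0) := odd_rootMultiplicity_sub_of_eventually_lt_of_gt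
    (h.mono fun _ ⟨⟨_, _, _⟩, _, _, _⟩ ↦ ⟨by linarith, by linarith⟩)
  have h₂₃ : Even ((P₃ - P₂).rootMultiplicity 0) := even_rootMultiplicity_sub_of_eventually_lt
    (h.mono fun _ ⟨⟨_, _, _⟩, _, _, _⟩ ↦ ⟨by linarith, by linarith⟩)
  have h₂₄ : Even ((P₄ - P₂).rootMultiplicity 0) := even_rootMultiplicity_sub_of_eventually_lt
    (h.mono fun _ ⟨⟨_, _, _⟩, _, _, _⟩ ↦ ⟨by linarith, by linarith⟩)
  have h₃₄ : Odd ((P₄ - P₃).rootMultiplicity 0) := odd_rootMultiplicity_sub_of_eventually_lt_of_gt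
    (h.mono fun _ ⟨⟨_, _, _⟩, _, _, _⟩ ↦ ⟨by linarith, by linarith⟩)
  obtain ⟨t, -, h₂₄', h₄₁', h₁₃'⟩ := h.exists
  have ne₂ : P₂ ≠ P₁ := ne_of_apply_ne (eval t) (h₂₄'.trans h₄₁').ne
  have ne₃ : P₃ ≠ P₁ := ne_of_apply_ne (eval t) h₁₃'.ne'
  have ne₄ : P₄ ≠ P₁ := ne_of_apply_ne (eval t) h₄₁'.ne
  simp only [Nat.odd_iff, Nat.even_iff] at *
  have e₂₃ := rootMultiplicity_sub_eq_min_of_ne 0 ne₂ ne₃ (by omega)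
  have e₃₄ := rootMultiplicity_sub_eq_min_of_ne 0 ne₃ ne₄ (by omega)
  have e₂₄ := rootMultiplicity_sub_eq_min_of_ne 0 ne₂ ne₄ (by omega)
  omega
end

section
/- Let n ≥ 2 and let π be a separable permutation of {1, …, n}. Then there exist two consecutive integers with consecutive images: there is an index i with 1 ≤ i ≤ n − 1 such that π(i+1) = π(i) + 1 or π(i+1) = π(i) − 1. -/
/-!
A separable permutation of length at least two is a direct sum `σ ⊕ τ` or a skew sum `σ ⊖ τ`
of two shorter separable permutations. This decomposition is found by adding the entries one
position at a time: if a new last entry `x` lands inside the lower summand `σ` of `σ ⊕ τ`, the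
entries of `σ` above `x` must all come after those below it (otherwise they form a `3142` with an
entry of `τ` and `x`), and this gives a new direct sum decomposition. A bond (adjacent positions
with adjacent values) of a summand of length at least two is a bond of the whole permutation, so
induction on the length leaves only the permutations `12` and `21`, which are bonds themselves.

Only relative order matters, so positions may form any finite subset of a linear order, and a
skew sum is a direct sum for the dual order on values.
-/

open Finset OrderDual

variable {ι α : Type*} [LinearOrder ι] [LinearOrder α] {f : ι → α} {s : Set ι} {i j k m : ι}

def SeparableOn (f : ι → α) (s : Set ι) : Prop :=
  ∀ ⦃i₁⦄, i₁ ∈ s → ∀ ⦃i₂⦄, i₂ ∈ s → ∀ ⦃i₃⦄, i₃ ∈ s → ∀ ⦃i₄⦄, i₄ ∈ s →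
    i₁ < i₂ → i₂ < i₃ → i₃ < i₄ →
      ¬ (f i₂ < f i₄ ∧ f i₄ < f i₁ ∧ f i₁ < f i₃) ∧ ¬ (f i₃ < f i₁ ∧ f i₁ < f i₄ ∧ f i₄ < f i₂)

theorem SeparableOn.mono {t : Set ι} (h : SeparableOn f s) (hts : t ⊆ s) : SeparableOn f t :=
  fun _ h₁ _ h₂ _ h₃ _ h₄ => h (hts h₁) (hts h₂) (hts h₃) (hts h₄)

theorem SeparableOn.toDual_comp (h : SeparableOn f s) : SeparableOn (toDual ∘ f) s :=
  fun _ h₁ _ h₂ _ h₃ _ h₄ h₁₂ h₂₃ h₃₄ =>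
    have h := h h₁ h₂ h₃ h₄ h₁₂ h₂₃ h₃₄
    ⟨fun ⟨h₄₂, h₁₄, h₃₁⟩ => h.2 ⟨h₃₁, h₁₄, h₄₂⟩, fun ⟨h₁₃, h₄₁, h₂₄⟩ => h.1 ⟨h₂₄, h₄₁, h₁₃⟩⟩

def IsSumSplitAt (f : ι → α) (s : Set ι) (k : ι) : Prop :=
  (∃ i ∈ s, i < k) ∧ (∃ j ∈ s, k ≤ j) ∧ ∀ i ∈ s, ∀ j ∈ s, i < k → k ≤ j → f i < f j

def IsSplitAt (f : ι → α) (s : Set ι) (k : ι) : Prop :=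
  IsSumSplitAt f s k ∨ IsSumSplitAt (toDual ∘ f) s k

theorem isSplitAt_toDual_comp : IsSplitAt (toDual ∘ f) s k ↔ IsSplitAt f s k :=
  Or.comm

theorem isSumSplitAt_insert_self (hs : s.Nonempty) (hm : ∀ i ∈ s, i < m)
    (hfm : ∀ i ∈ s, f i < f m) : IsSumSplitAt f (insert m s) m := by
  obtain ⟨i₀, hi₀⟩ := hs
  refine ⟨⟨i₀, .inr hi₀, hm i₀ hi₀⟩, ⟨m, .inl rfl, le_rfl⟩, ?_⟩
  rintro i (rfl | hi) j (rfl | hj) hik hkj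
  · exact (lt_irrefl _ hik).elim
  · exact (lt_irrefl _ hik).elim
  · exact hfm i hi
  · exact (lt_irrefl _ (hkj.trans_lt (hm j hj))).elim

theorem IsSumSplitAt.insert_of_lower_lt (hk : IsSumSplitAt f s k) (hm : ∀ i ∈ s, i < m)
    (hlow : ∀ i ∈ s, i < k → f i < f m) : IsSumSplitAt f (insert m s) k := by
  obtain ⟨⟨i₀, hi₀, hi₀k⟩, ⟨j₀, hj₀, hkj₀⟩, hlt⟩ := hk
  refine ⟨⟨i₀, .inr hi₀, hi₀k⟩, ⟨j₀, .inr hj₀, hkj₀⟩, ?_⟩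
  rintro i (rfl | hi) j (rfl | hj) hik hkj
  · exact (lt_irrefl _ (hik.trans_le hkj)).elim
  · exact (lt_irrefl _ ((hik.trans_le hkj₀).trans (hm j₀ hj₀))).elim
  · exact hlow i hi hik
  · exact hlt i hi j hj hik hkj

theorem IsSumSplitAt.exists_isSumSplitAt_insert {t : Finset ι} {a b : ι}
    (hk : IsSumSplitAt f t k) (hm : ∀ i ∈ t, i < m) (hfm : ∀ i ∈ t, f i ≠ f m)
    (hsep : SeparableOn f (insert m t)) (ha : a ∈ t) (hak : a < k) (hfa : f m < f a)
    (hb : b ∈ t) (hfb : f b < f m) : ∃ k', IsSumSplitAt f (insert m t) k' := by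
  obtain ⟨-, ⟨j₀, hj₀, hkj₀⟩, hlt⟩ := hk
  have hj₀m : j₀ < m := hm j₀ hj₀
  -- Otherwise `q, p, j₀, m` would form the pattern `3142`.
  have habove : ∀ q ∈ t, ∀ p ∈ t, q ≤ p → p < k → f m < f q → f m < f p := by
    intro q hq p hp hqp hpk hfq
    obtain rfl | hqp := hqp.eq_or_lt
    · exact hfq
    by_contra! hfp
    exact (hsep (.inr hq) (.inr hp) (.inr hj₀) (.inl rfl) hqp (hpk.trans_le hkj₀) hj₀m).1
      ⟨hfp.lt_of_ne (hfm p hp), hfq, hlt q hq j₀ hj₀ (hqp.trans hpk) hkj₀⟩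
  set H := t.filter fun q => q < k ∧ f m < f q
  have hH : H.Nonempty := ⟨a, mem_filter.2 ⟨ha, hak, hfa⟩⟩
  obtain ⟨hk't, hk'k, hfk'⟩ := mem_filter.1 (H.min'_mem hH)
  set k' := H.min' hH
  have hbelow : ∀ i ∈ t, i < k' → f i < f m := by
    intro i hi hik'
    refine (not_lt.1 fun hfi => ?_).lt_of_ne (hfm i hi)
    exact (H.min'_le i (mem_filter.2 ⟨hi, hik'.trans hk'k, hfi⟩)).not_gt hik'
  have hbk : b < k := lt_of_not_ge fun h => (hfb.trans hfa).not_gt (hlt a ha b hb hak h)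
  have hbk' : b < k' := lt_of_not_ge fun h => (habove k' hk't b hb h hbk hfk').not_gt hfb
  refine ⟨k', ⟨b, .inr hb, hbk'⟩, ⟨k', .inr hk't, le_rfl⟩, ?_⟩
  rintro i (rfl | hi) j (rfl | hj) hik hkj
  · exact (lt_irrefl _ (hik.trans_le hkj)).elim
  · exact (lt_irrefl _ (((hik.trans hk'k).trans_le hkj₀).trans hj₀m)).elim
  · exact hbelow i hi hik
  · rcases lt_or_ge j k with hjk | hkj'
    · exact (hbelow i hi hik).trans (habove k' hk't j hj hkj hjk hfk')
    · exact hlt i hi j hj (hik.trans hk'k) hkj'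

theorem IsSumSplitAt.exists_isSplitAt_insert {t : Finset ι} (hk : IsSumSplitAt f t k)
    (hm : ∀ i ∈ t, i < m) (hfm : ∀ i ∈ t, f i ≠ f m) (hsep : SeparableOn f (insert m t)) :
    ∃ k', IsSplitAt f (insert m t) k' := by
  by_cases hlow : ∀ i ∈ t, i < k → f i < f m
  · exact ⟨k, .inl (hk.insert_of_lower_lt hm hlow)⟩
  by_cases hhigh : ∀ i ∈ t, f m < f i
  · obtain ⟨⟨i₀, hi₀, -⟩, -⟩ := hk
    exact ⟨m, .inr (isSumSplitAt_insert_self ⟨i₀, hi₀⟩ hm hhigh)⟩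
  push Not at hlow hhigh
  obtain ⟨a, ha, hak, hfa⟩ := hlow
  obtain ⟨b, hb, hfb⟩ := hhigh
  obtain ⟨k', hk'⟩ := hk.exists_isSumSplitAt_insert hm hfm hsep ha hak
    (hfa.lt_of_ne' (hfm a ha)) hb (hfb.lt_of_ne (hfm b hb))
  exact ⟨k', .inl hk'⟩

theorem SeparableOn.exists_isSplitAt {s : Finset ι} (hs : 2 ≤ #s) (hinj : Set.InjOn f s)
    (hsep : SeparableOn f s) : ∃ k, IsSplitAt f s k := by
  induction s using Finset.induction_on_max with
  | empty => simp at hs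
  | insert m t hm ih =>
    rw [coe_insert] at hinj hsep ⊢
    have hfm : ∀ i ∈ t, f i ≠ f m := fun i hi h =>
      (hm i hi).ne (hinj (.inr hi) (.inl rfl) h)
    rw [card_insert_of_notMem fun h => lt_irrefl _ (hm m h)] at hs
    obtain ht | ht := (Nat.le_of_lt_succ hs).eq_or_lt'
    · obtain ⟨a, rfl⟩ := card_eq_one.1 ht
      simp only [mem_singleton, forall_eq] at hm hfm
      rw [coe_singleton]
      obtain hfa | hfa := hfm.lt_or_gt
      · exact ⟨m, .inl (isSumSplitAt_insert_self (by simp) (by simpa) (by simpa))⟩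
      · exact ⟨m, .inr (isSumSplitAt_insert_self (f := toDual ∘ f) (by simp) (by simpa)
          (by simpa))⟩
    obtain ⟨k, hk | hk⟩ := ih ht (hinj.mono (Set.subset_insert _ _))
      (hsep.mono (Set.subset_insert _ _))
    · exact hk.exists_isSplitAt_insert hm hfm hsep
    · obtain ⟨k', hk'⟩ := hk.exists_isSplitAt_insert hm hfm hsep.toDual_comp
      exact ⟨k', isSplitAt_toDual_comp.1 hk'⟩

def IsBondOn (f : ι → α) (s : Set ι) (i j : ι) : Prop :=
  i ∈ s ∧ j ∈ s ∧ i < j ∧ ∀ p ∈ s, p ∉ Set.Ioo i j ∧ f p ∉ Set.uIoo (f i) (f j)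

theorem isBondOn_pair (hij : i < j) : IsBondOn f {i, j} i j := by
  refine ⟨.inl rfl, .inr rfl, hij, ?_⟩
  rintro p (rfl | rfl)
  · simp
  · simp

theorem isBondOn_toDual_comp : IsBondOn (toDual ∘ f) s i j ↔ IsBondOn f s i j := by
  simp [IsBondOn]

theorem IsSumSplitAt.isBondOn_of_lower (hk : IsSumSplitAt f s k)
    (h : IsBondOn f {p ∈ s | p < k} i j) : IsBondOn f s i j := by
  obtain ⟨⟨hi, hik⟩, ⟨hj, hjk⟩, hij, hbond⟩ := h
  refine ⟨hi, hj, hij, fun p hp => ?_⟩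
  rcases lt_or_ge p k with hpk | hkp
  · exact hbond p ⟨hp, hpk⟩
  refine ⟨fun hp' => (hjk.trans_le hkp).not_gt hp'.2, fun hp' => ?_⟩
  rcases lt_sup_iff.1 hp'.2 with h | h
  · exact (hk.2.2 i hi p hp hik hkp).not_gt h
  · exact (hk.2.2 j hj p hp hjk hkp).not_gt h

theorem IsSumSplitAt.isBondOn_of_upper (hk : IsSumSplitAt f s k)
    (h : IsBondOn f {p ∈ s | k ≤ p} i j) : IsBondOn f s i j := by
  obtain ⟨⟨hi, hki⟩, ⟨hj, hkj⟩, hij, hbond⟩ := h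
  refine ⟨hi, hj, hij, fun p hp => ?_⟩
  rcases lt_or_ge p k with hpk | hkp
  · refine ⟨fun hp' => (hpk.trans_le hki).not_gt hp'.1, fun hp' => ?_⟩
    rcases inf_lt_iff.1 hp'.1 with h | h
    · exact (hk.2.2 p hp i hi hpk hki).not_gt h
    · exact (hk.2.2 p hp j hj hpk hkj).not_gt h
  · exact hbond p ⟨hp, hkp⟩

theorem IsSplitAt.isBondOn_of_lower (hk : IsSplitAt f s k)
    (h : IsBondOn f {p ∈ s | p < k} i j) : IsBondOn f s i j :=
  hk.elim (·.isBondOn_of_lower h) fun hk =>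
    isBondOn_toDual_comp.1 (hk.isBondOn_of_lower (isBondOn_toDual_comp.2 h))

theorem IsSplitAt.isBondOn_of_upper (hk : IsSplitAt f s k)
    (h : IsBondOn f {p ∈ s | k ≤ p} i j) : IsBondOn f s i j :=
  hk.elim (·.isBondOn_of_upper h) fun hk =>
    isBondOn_toDual_comp.1 (hk.isBondOn_of_upper (isBondOn_toDual_comp.2 h))

theorem SeparableOn.exists_isBondOn {s : Finset ι} (hs : 2 ≤ #s) (hinj : Set.InjOn f s)
    (hsep : SeparableOn f s) : ∃ i j, IsBondOn f s i j := by
  induction s using Finset.strongInduction with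
  | H s ih =>
  obtain hs | hs := hs.eq_or_lt
  · obtain ⟨x, y, hxy, rfl⟩ := card_eq_two.1 hs.symm
    rcases hxy.lt_or_gt with h | h
    · exact ⟨x, y, by simpa using isBondOn_pair h⟩
    · exact ⟨y, x, by simpa [Set.pair_comm] using isBondOn_pair h⟩
  obtain ⟨k, hk⟩ := hsep.exists_isSplitAt hs.le hinj
  obtain ⟨⟨i₀, hi₀, hi₀k⟩, ⟨j₀, hj₀, hkj₀⟩⟩ : (∃ i ∈ s, i < k) ∧ ∃ j ∈ s, k ≤ j :=
    hk.elim (fun h => ⟨h.1, h.2.1⟩) fun h => ⟨h.1, h.2.1⟩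
  have hcard := card_filter_add_card_filter_not (s := s) (· < k)
  simp only [not_lt] at hcard
  by_cases hlow : 2 ≤ #(s.filter (· < k))
  · obtain ⟨i, j, hij⟩ := ih (s.filter (· < k)) (filter_ssubset.2 ⟨j₀, hj₀, hkj₀.not_gt⟩)
      hlow (hinj.mono (coe_subset.2 (filter_subset _ _)))
      (hsep.mono (coe_subset.2 (filter_subset _ _)))
    exact ⟨i, j, hk.isBondOn_of_lower (by simpa using hij)⟩
  · obtain ⟨i, j, hij⟩ := ih (s.filter (k ≤ ·)) (filter_ssubset.2 ⟨i₀, hi₀, not_le.2 hi₀k⟩)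
      (by omega) (hinj.mono (coe_subset.2 (filter_subset _ _)))
      (hsep.mono (coe_subset.2 (filter_subset _ _)))
    exact ⟨i, j, hk.isBondOn_of_upper (by simpa using hij)⟩

theorem covBy_or_covBy_of_forall_notMem_uIoo {a b : α} (hab : a ≠ b)
    (h : ∀ c, c ∉ Set.uIoo a b) : a ⋖ b ∨ b ⋖ a := by
  rcases hab.lt_or_gt with hab | hab
  · exact .inl ⟨hab, fun c hac hcb => h c (Set.mem_uIoo_of_lt hac hcb)⟩
  · exact .inr ⟨hab, fun c hbc hca => h c (Set.mem_uIoo_of_gt hbc hca)⟩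

/-- Every separable permutation of `{1, …, n}` (with `n ≥ 2`) has two consecutive
integers with consecutive images. -/
theorem separable_has_consecutive_images (n : ℕ) (hn : 2 ≤ n) (π : Equiv.Perm (Fin n))
    (hsep : ¬ ∃ i₁ i₂ i₃ i₄ : Fin n, i₁ < i₂ ∧ i₂ < i₃ ∧ i₃ < i₄ ∧
        ((π i₂ < π i₄ ∧ π i₄ < π i₁ ∧ π i₁ < π i₃) ∨
         (π i₃ < π i₁ ∧ π i₁ < π i₄ ∧ π i₄ < π i₂))) :
    ∃ (i : Fin n) (h : i.val + 1 < n),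
      (π ⟨i.val + 1, h⟩).val = (π i).val + 1 ∨
      (π i).val = (π ⟨i.val + 1, h⟩).val + 1 := by
  have hsep' : SeparableOn π (univ : Finset (Fin n)) :=
    fun i₁ _ i₂ _ i₃ _ i₄ _ h₁₂ h₂₃ h₃₄ => not_or.1 fun h => hsep ⟨i₁, i₂, i₃, i₄, h₁₂, h₂₃, h₃₄, h⟩
  obtain ⟨i, j, -, -, hij, hbond⟩ :=
    hsep'.exists_isBondOn (by simpa using hn) π.injective.injOn
  have hpos : i ⋖ j := ⟨hij, fun p hip hpj => (hbond p (by simp)).1 ⟨hip, hpj⟩⟩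
  have hval : π i ⋖ π j ∨ π j ⋖ π i := covBy_or_covBy_of_forall_notMem_uIoo
    (π.injective.ne hij.ne) fun v => by simpa using (hbond (π.symm v) (by simp)).2
  simp only [Fin.covBy_iff, Nat.covBy_iff_add_one_eq] at hpos hval
  refine ⟨i, hpos ▸ j.isLt, ?_⟩
  rw [show (⟨i + 1, _⟩ : Fin n) = j from Fin.ext hpos]
  omega
end

section
/- For every natural number n, the number of permutations π of {1, …, n} that avoid the pattern (2,3,1) — i.e. for which there exist no indices i < j < k in {1, …, n} with π(k) < π(i) < π(j) — equals the n-th Catalan number Cₙ = (1/(n+1))·binom(2n, n). (These are exactly the stack-sortable permutations.) -/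
open Finset Equiv

namespace Av231

def Avoids {n : ℕ} (π : Equiv.Perm (Fin n)) : Prop :=
  ¬ ∃ i j k : Fin n, i < j ∧ j < k ∧ π k < π i ∧ π i < π j

instance {n : ℕ} : DecidablePred (Avoids (n := n)) := fun π => by
  unfold Avoids; infer_instance

abbrev Av (n : ℕ) : Type := {π : Equiv.Perm (Fin n) // Avoids π}

lemma lt_last_of_ne {n : ℕ} {π : Equiv.Perm (Fin (n+1))} {p i : Fin (n+1)}
    (hp : π p = Fin.last n) (hi : i ≠ p) : (π i).val < n := by
  have hne : π i ≠ Fin.last n := by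
    rw [← hp]; intro h; exact hi (π.injective h)
  have h1 : (π i).val ≤ n := Fin.is_le _
  exact lt_of_le_of_ne h1 (fun h => hne (Fin.ext h))

lemma val_lt_of_lt {n : ℕ} {π : Equiv.Perm (Fin (n+1))} (hπ : Avoids π) {p i : Fin (n+1)}
    (hp : π p = Fin.last n) (hi : i < p) : (π i).val < p.val := by
  have key : ∀ k : Fin (n+1), p ≤ k → (π i).val < (π k).val := by
    intro k hk
    rcases eq_or_lt_of_le hk with h | h
    · subst h; rw [hp]; exact lt_last_of_ne hp (ne_of_lt hi)
    · by_contra hle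
      push_neg at hle
      have hik : i < k := hi.trans h
      have hne2 : π k ≠ π i := fun hh => (ne_of_lt hik).symm (π.injective hh)
      have h1 : π k < π i := lt_of_le_of_ne (Fin.le_def.mpr hle) hne2
      have h2 : π i < π p := by rw [hp]; exact Fin.lt_def.mpr (lt_last_of_ne hp (ne_of_lt hi))
      exact hπ ⟨i, p, k, hi, h, h1, h2⟩
  have hcard : (Finset.Ici p).card ≤ (Finset.Ioi (π i)).card := by
    apply Finset.card_le_card_of_injOn π
    · intro k hk
      simp only [Finset.mem_coe, Finset.mem_Ici] at hk
      rw [Finset.mem_coe, Finset.mem_Ioi]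
      exact Fin.lt_def.mpr (key k hk)
    · exact fun a _ b _ h => π.injective h
  rw [Fin.card_Ici, Fin.card_Ioi] at hcard
  have h1 : p.val ≤ n := Fin.is_le _
  have h2 : (π i).val ≤ n := Fin.is_le _
  omega

lemma le_val_of_gt {n : ℕ} {π : Equiv.Perm (Fin (n+1))} (hπ : Avoids π) {p k : Fin (n+1)}
    (hp : π p = Fin.last n) (hk : p < k) : p.val ≤ (π k).val := by
  have key : ∀ i : Fin (n+1), i < p → (π i).val < (π k).val := by
    intro i hi
    by_contra hle
    push_neg at hle
    have hik : i < k := hi.trans hk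
    have hne2 : π k ≠ π i := fun hh => (ne_of_lt hik).symm (π.injective hh)
    have h1 : π k < π i := lt_of_le_of_ne (Fin.le_def.mpr hle) hne2
    have h2 : π i < π p := by rw [hp]; exact Fin.lt_def.mpr (lt_last_of_ne hp (ne_of_lt hi))
    exact hπ ⟨i, p, k, hi, hk, h1, h2⟩
  have hcard : (Finset.Iio p).card ≤ (Finset.Iio (π k)).card := by
    apply Finset.card_le_card_of_injOn π
    · intro i hi
      simp only [Finset.mem_coe, Finset.mem_Iio] at hi ⊢
      exact Fin.lt_def.mpr (key i hi)
    · exact fun a _ b _ h => π.injective h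
  rwa [Fin.card_Iio, Fin.card_Iio] at hcard



def glueFun {n : ℕ} (p : Fin (n+1)) (σ : Equiv.Perm (Fin p.val)) (τ : Equiv.Perm (Fin (n - p.val)))
    (i : Fin (n+1)) : Fin (n+1) :=
  if h : i.val < p.val then
    ⟨(σ ⟨i.val, h⟩).val, by have := (σ ⟨i.val, h⟩).isLt; have := p.is_le; omega⟩
  else if h2 : i.val = p.val then Fin.last n
  else ⟨p.val + (τ ⟨i.val - (p.val+1), by have := i.isLt; omega⟩).val, by
    have := (τ ⟨i.val - (p.val+1), by have := i.isLt; omega⟩).isLt; have := p.is_le; omega⟩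

variable {n : ℕ} {p : Fin (n+1)} {σ : Equiv.Perm (Fin p.val)} {τ : Equiv.Perm (Fin (n - p.val))}

lemma glue_val_of_lt {i : Fin (n+1)} (h : i.val < p.val) :
    (glueFun p σ τ i).val = (σ ⟨i.val, h⟩).val := by
  rw [glueFun, dif_pos h]

lemma glue_of_eq {i : Fin (n+1)} (h : i.val = p.val) : glueFun p σ τ i = Fin.last n := by
  rw [glueFun, dif_neg (by omega), dif_pos h]

lemma glue_val_of_gt {i : Fin (n+1)} (h : p.val < i.val) :
    (glueFun p σ τ i).val = p.val + (τ ⟨i.val - (p.val+1), by have := i.isLt; omega⟩).val := by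
  rw [glueFun, dif_neg (by omega), dif_neg (by omega)]


lemma glue_inj : Function.Injective (glueFun p σ τ) := by
  intro a b hab
  have hab' : (glueFun p σ τ a).val = (glueFun p σ τ b).val := congrArg Fin.val hab
  have hpn : p.val ≤ n := p.is_le
  rcases lt_trichotomy a.val p.val with ha | ha | ha <;>
    rcases lt_trichotomy b.val p.val with hb | hb | hb
  · rw [glue_val_of_lt ha, glue_val_of_lt hb] at hab'
    have h2 := congrArg Fin.val (σ.injective (Fin.ext hab'))
    exact Fin.ext h2
  · rw [glue_val_of_lt ha, glue_of_eq hb] at hab'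
    have := (σ ⟨a.val, ha⟩).isLt; simp [Fin.last] at hab'; omega
  · rw [glue_val_of_lt ha, glue_val_of_gt hb] at hab'
    have := (σ ⟨a.val, ha⟩).isLt; omega
  · rw [glue_of_eq ha, glue_val_of_lt hb] at hab'
    have := (σ ⟨b.val, hb⟩).isLt; simp [Fin.last] at hab'; omega
  · exact Fin.ext (ha.trans hb.symm)
  · rw [glue_of_eq ha, glue_val_of_gt hb] at hab'
    have := (τ ⟨b.val - (p.val+1), by have := b.isLt; omega⟩).isLt
    simp [Fin.last] at hab'; omega
  · rw [glue_val_of_gt ha, glue_val_of_lt hb] at hab'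
    have := (σ ⟨b.val, hb⟩).isLt; omega
  · rw [glue_val_of_gt ha, glue_of_eq hb] at hab'
    have := (τ ⟨a.val - (p.val+1), by have := a.isLt; omega⟩).isLt
    simp [Fin.last] at hab'; omega
  · rw [glue_val_of_gt ha, glue_val_of_gt hb] at hab'
    have h3 : (τ ⟨a.val - (p.val+1), by have := a.isLt; omega⟩).val
        = (τ ⟨b.val - (p.val+1), by have := b.isLt; omega⟩).val := by omega
    have h4 := congrArg Fin.val (τ.injective (Fin.ext h3))
    simp only at h4
    exact Fin.ext (by omega)

noncomputable def gluePerm (p : Fin (n+1)) (σ : Equiv.Perm (Fin p.val))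
    (τ : Equiv.Perm (Fin (n - p.val))) : Equiv.Perm (Fin (n+1)) :=
  Equiv.ofBijective (glueFun p σ τ) (Finite.injective_iff_bijective.mp glue_inj)

lemma glue_avoids (hσ : Avoids σ) (hτ : Avoids τ) :
    ¬ ∃ i j k : Fin (n+1), i < j ∧ j < k ∧
      glueFun p σ τ k < glueFun p σ τ i ∧ glueFun p σ τ i < glueFun p σ τ j := by
  rintro ⟨i, j, k, hij, hjk, h1, h2⟩
  rw [Fin.lt_def] at hij hjk h1 h2
  rcases lt_trichotomy j.val p.val with hj | hj | hj
  · -- all three in left block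
    have hi : i.val < p.val := by omega
    have hgi : (glueFun p σ τ i).val < p.val := by
      rw [glue_val_of_lt hi]; exact (σ _).isLt
    have hk : k.val < p.val := by
      by_contra h
      push_neg at h
      have hgk : p.val ≤ (glueFun p σ τ k).val := by
        rcases eq_or_lt_of_le h with h' | h'
        · rw [glue_of_eq h'.symm]; exact p.is_le
        · rw [glue_val_of_gt h']; omega
      omega
    refine hσ ⟨⟨i.val, hi⟩, ⟨j.val, hj⟩, ⟨k.val, hk⟩, ?_, ?_, ?_, ?_⟩ <;> rw [Fin.lt_def]
    · exact hij
    · exact hjk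
    · rw [← glue_val_of_lt hk, ← glue_val_of_lt hi]; exact h1
    · rw [← glue_val_of_lt hi, ← glue_val_of_lt hj]; exact h2
  · -- j = p
    have hi : i.val < p.val := by omega
    have hk : p.val < k.val := by omega
    have hgi : (glueFun p σ τ i).val < p.val := by
      rw [glue_val_of_lt hi]; exact (σ _).isLt
    have hgk : p.val ≤ (glueFun p σ τ k).val := by
      rw [glue_val_of_gt hk]; omega
    omega
  · -- j right of p
    have hk : p.val < k.val := by omega
    have hgj : (glueFun p σ τ j).val < n := by
      rw [glue_val_of_gt hj]
      have := (τ ⟨j.val - (p.val+1), by have := j.isLt; omega⟩).isLt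
      omega
    rcases lt_trichotomy i.val p.val with hi | hi | hi
    · have hgi : (glueFun p σ τ i).val < p.val := by
        rw [glue_val_of_lt hi]; exact (σ _).isLt
      have hgk : p.val ≤ (glueFun p σ τ k).val := by
        rw [glue_val_of_gt hk]; omega
      omega
    · have : (glueFun p σ τ i).val = n := by rw [glue_of_eq hi]; rfl
      omega
    · have hτk := (τ ⟨k.val - (p.val+1), by have := k.isLt; omega⟩).isLt
      refine hτ ⟨⟨i.val - (p.val+1), by have := i.isLt; omega⟩,
        ⟨j.val - (p.val+1), by have := j.isLt; omega⟩,
        ⟨k.val - (p.val+1), by have := k.isLt; omega⟩, ?_, ?_, ?_, ?_⟩ <;> rw [Fin.lt_def]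
      · simp only; omega
      · simp only; omega
      · rw [glue_val_of_gt hk, glue_val_of_gt hi] at h1; omega
      · rw [glue_val_of_gt hi, glue_val_of_gt hj] at h2; omega


namespace Split
variable {n : ℕ} {π : Equiv.Perm (Fin (n+1))} {p : Fin (n+1)}

def splitLFun (π : Equiv.Perm (Fin (n+1))) (hπ : Avoids π) (p : Fin (n+1))
    (hp : π p = Fin.last n) (i : Fin p.val) : Fin p.val :=
  ⟨(π ⟨i.val, by have := p.isLt; omega⟩).val, by
    refine Av231.val_lt_of_lt hπ hp ?_
    exact Fin.lt_def.mpr i.isLt⟩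

def splitRFun (π : Equiv.Perm (Fin (n+1))) (hπ : Avoids π) (p : Fin (n+1))
    (hp : π p = Fin.last n) (i : Fin (n - p.val)) : Fin (n - p.val) :=
  ⟨(π ⟨p.val + 1 + i.val, by have := i.isLt; omega⟩).val - p.val, by
    have h1 : p.val ≤ (π ⟨p.val + 1 + i.val, by have := i.isLt; omega⟩).val :=
      Av231.le_val_of_gt hπ hp (Fin.lt_def.mpr (by simp; omega))
    have h2 : (π ⟨p.val + 1 + i.val, by have := i.isLt; omega⟩).val < n :=
      Av231.lt_last_of_ne hp (by intro h; have := congrArg Fin.val h; simp at this; omega)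
    omega⟩

lemma splitL_inj (hπ : Avoids π) (hp : π p = Fin.last n) :
    Function.Injective (splitLFun π hπ p hp) := by
  intro a b hab
  have h := congrArg Fin.val hab
  simp only [splitLFun] at h
  have := congrArg Fin.val (π.injective (Fin.ext h))
  simp only at this
  exact Fin.ext this

lemma splitR_inj (hπ : Avoids π) (hp : π p = Fin.last n) :
    Function.Injective (splitRFun π hπ p hp) := by
  intro a b hab
  have h := congrArg Fin.val hab
  simp only [splitRFun] at h
  have ha : p.val ≤ (π ⟨p.val + 1 + a.val, by have := a.isLt; omega⟩).val :=
    Av231.le_val_of_gt hπ hp (Fin.lt_def.mpr (by simp; omega))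
  have hb : p.val ≤ (π ⟨p.val + 1 + b.val, by have := b.isLt; omega⟩).val :=
    Av231.le_val_of_gt hπ hp (Fin.lt_def.mpr (by simp; omega))
  have h2 : (π ⟨p.val + 1 + a.val, by have := a.isLt; omega⟩).val
      = (π ⟨p.val + 1 + b.val, by have := b.isLt; omega⟩).val := by omega
  have := congrArg Fin.val (π.injective (Fin.ext h2))
  simp only at this
  exact Fin.ext (by omega)

noncomputable def splitLPerm (π : Equiv.Perm (Fin (n+1))) (hπ : Avoids π) (p : Fin (n+1))
    (hp : π p = Fin.last n) : Equiv.Perm (Fin p.val) :=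
  Equiv.ofBijective _ (Finite.injective_iff_bijective.mp (splitL_inj hπ hp))

noncomputable def splitRPerm (π : Equiv.Perm (Fin (n+1))) (hπ : Avoids π) (p : Fin (n+1))
    (hp : π p = Fin.last n) : Equiv.Perm (Fin (n - p.val)) :=
  Equiv.ofBijective _ (Finite.injective_iff_bijective.mp (splitR_inj hπ hp))

lemma splitL_avoids (hπ : Avoids π) (hp : π p = Fin.last n) :
    Avoids (splitLPerm π hπ p hp) := by
  rintro ⟨i, j, k, hij, hjk, h1, h2⟩
  rw [Fin.lt_def] at hij hjk h1 h2
  have hpn := p.isLt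
  refine hπ ⟨⟨i.val, by omega⟩, ⟨j.val, by omega⟩, ⟨k.val, by omega⟩, ?_, ?_, ?_, ?_⟩ <;>
    rw [Fin.lt_def]
  · exact hij
  · exact hjk
  · exact h1
  · exact h2

lemma splitR_avoids (hπ : Avoids π) (hp : π p = Fin.last n) :
    Avoids (splitRPerm π hπ p hp) := by
  rintro ⟨i, j, k, hij, hjk, h1, h2⟩
  rw [Fin.lt_def] at hij hjk h1 h2
  simp only [splitRPerm, Equiv.ofBijective_apply, splitRFun] at h1 h2
  have hi : p.val ≤ (π ⟨p.val + 1 + i.val, by have := i.isLt; omega⟩).val :=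
    Av231.le_val_of_gt hπ hp (Fin.lt_def.mpr (by simp; omega))
  have hj : p.val ≤ (π ⟨p.val + 1 + j.val, by have := j.isLt; omega⟩).val :=
    Av231.le_val_of_gt hπ hp (Fin.lt_def.mpr (by simp; omega))
  have hk : p.val ≤ (π ⟨p.val + 1 + k.val, by have := k.isLt; omega⟩).val :=
    Av231.le_val_of_gt hπ hp (Fin.lt_def.mpr (by simp; omega))
  refine hπ ⟨⟨p.val + 1 + i.val, by have := i.isLt; omega⟩,
    ⟨p.val + 1 + j.val, by have := j.isLt; omega⟩,
    ⟨p.val + 1 + k.val, by have := k.isLt; omega⟩, ?_, ?_, ?_, ?_⟩ <;> rw [Fin.lt_def]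
  · simp only; omega
  · simp only; omega
  · omega
  · omega

end Split


section Main
variable {n : ℕ}

open Split

noncomputable def fiberEquiv (p : Fin (n+1)) :
    {x : Av (n+1) // x.1.symm (Fin.last n) = p} ≃ Av p.val × Av (n - p.val) where
  toFun := fun x =>
    match x with
    | ⟨⟨π, hπ⟩, hx⟩ =>
      have hp : π p = Fin.last n := by rw [← hx]; exact π.apply_symm_apply _
      (⟨splitLPerm π hπ p hp, splitL_avoids hπ hp⟩,
       ⟨splitRPerm π hπ p hp, splitR_avoids hπ hp⟩)
  invFun y :=
    ⟨⟨gluePerm p y.1.1 y.2.1, glue_avoids y.1.2 y.2.2⟩, by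
      rw [Equiv.symm_apply_eq]
      exact (glue_of_eq rfl).symm⟩
  left_inv := by
    rintro ⟨⟨π, hπ⟩, hx⟩
    have hp : π p = Fin.last n := by
      rw [← hx]; exact π.apply_symm_apply _
    apply Subtype.ext
    apply Subtype.ext
    apply Equiv.ext
    intro i
    simp only [gluePerm, Equiv.ofBijective_apply]
    rcases lt_trichotomy i.val p.val with h | h | h
    · apply Fin.ext
      rw [glue_val_of_lt h]
      have key : ∀ a : Fin (n+1), a.val = i.val → (π a).val = (π i).val := by
        intro a ha
        rw [Fin.ext ha]
      exact key _ rfl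
    · rw [glue_of_eq h]
      have : i = p := Fin.ext h
      rw [this, hp]
    · apply Fin.ext
      rw [glue_val_of_gt h]
      have key : ∀ a : Fin (n+1), a.val = p.val + 1 + (i.val - (p.val+1)) →
          p.val + ((π a).val - p.val) = (π i).val := by
        intro a ha
        have hai : a = i := Fin.ext (by omega)
        subst hai
        have := Av231.le_val_of_gt hπ hp (Fin.lt_def.mpr h)
        omega
      exact key _ rfl
  right_inv := by
    rintro ⟨⟨σ, hσ⟩, ⟨τ, hτ⟩⟩
    have hp : gluePerm p σ τ p = Fin.last n := glue_of_eq rfl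
    refine Prod.ext (Subtype.ext (Equiv.ext fun i => ?_)) (Subtype.ext (Equiv.ext fun i => ?_))
    · apply Fin.ext
      show (gluePerm p σ τ ⟨i.val, _⟩).val - 0 = (σ i).val
      simp only [gluePerm, Equiv.ofBijective_apply, Nat.sub_zero]
      rw [glue_val_of_lt i.isLt]
    · apply Fin.ext
      show (gluePerm p σ τ ⟨p.val + 1 + i.val, _⟩).val - p.val = (τ i).val
      simp only [gluePerm, Equiv.ofBijective_apply]
      rw [glue_val_of_gt (by simp; omega)]
      have key : ∀ a : Fin (n - p.val), a.val = i.val →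
          p.val + (τ a).val - p.val = (τ i).val := by
        intro a ha
        rw [Fin.ext ha]
        omega
      refine key _ ?_
      show p.val + 1 + i.val - (p.val + 1) = i.val
      omega

lemma card_succ (n : ℕ) : Fintype.card (Av (n+1)) =
    ∑ p : Fin (n+1), Fintype.card (Av p.val) * Fintype.card (Av (n - p.val)) := by
  rw [Fintype.card_congr
    (Equiv.sigmaFiberEquiv (fun x : Av (n+1) => x.1.symm (Fin.last n))).symm,
    Fintype.card_sigma]
  exact Finset.sum_congr rfl fun p _ => by
    rw [Fintype.card_congr (fiberEquiv p), Fintype.card_prod]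

lemma card_av (n : ℕ) : Fintype.card (Av n) = catalan n := by
  induction n using Nat.strong_induction_on with
  | _ n ih =>
    match n with
    | 0 =>
      rw [catalan_zero]
      rw [Fintype.card_eq_one_iff]
      refine ⟨⟨1, by rintro ⟨i, -⟩; exact i.elim0⟩, fun y => Subtype.ext (Equiv.ext fun i => i.elim0)⟩
    | (m+1) =>
      rw [card_succ, catalan_succ]
      refine Finset.sum_congr rfl fun p _ => ?_
      rw [ih p.val (by have := p.isLt; omega), ih (m - p.val) (by omega)]

end Main
end Av231

/-- The number of permutations of `{1, …, n}` avoiding the pattern `(2,3,1)`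
(the stack-sortable permutations) is the `n`-th Catalan number. -/
theorem card_avoid_231_eq_catalan (n : ℕ) :
    Nat.card {π : Equiv.Perm (Fin n) //
      ¬ ∃ i j k : Fin n, i < j ∧ j < k ∧ π k < π i ∧ π i < π j} = catalan n := by
  rw [Nat.card_eq_fintype_card, ← Av231.card_av n]
  exact Fintype.card_congr (Equiv.refl _)
end

section
/- For n ≥ 1 let aₙ denote the number of separable permutations of {1, …, n} (so a₁ = 1, a₂ = 2, a₃ = 6, a₄ = 22, the large Schroeder numbers), and set a₀ = 0. Then the formal power series A(t) = Σ_{n≥0} aₙ tⁿ with integer coefficients satisfies the identity A(t)² − (1 − t)·A(t) + t = 0 in ℤ[[t]]. -/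
open Equiv Finset

section Graph
variable {V : Type*} [DecidableEq V]
set_option linter.unusedSectionVars false

def GReach (A : V → V → Prop) (s : Finset V) : V → V → Prop :=
  Relation.ReflTransGen (fun u w => u ∈ s ∧ w ∈ s ∧ A u w)

def GDisconn (A : V → V → Prop) (s : Finset V) : Prop :=
  ∃ x ∈ s, ∃ y ∈ s, ¬ GReach A s x y

def GCompl (A : V → V → Prop) : V → V → Prop := fun x y => x ≠ y ∧ ¬ A x y

def NoP4 (A : V → V → Prop) (s : Finset V) : Prop :=
  ¬ ∃ a b c d, a ∈ s ∧ b ∈ s ∧ c ∈ s ∧ d ∈ s ∧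
    A a b ∧ A b c ∧ A c d ∧ ¬ A a c ∧ ¬ A b d ∧ ¬ A a d ∧ a ≠ c ∧ b ≠ d ∧ a ≠ d

variable {A : V → V → Prop} {s : Finset V}

lemma GReach.symm (hsym : ∀ x y, A x y → A y x) {x y : V} (h : GReach A s x y) :
    GReach A s y x := by
  induction h with
  | refl => exact Relation.ReflTransGen.refl
  | tail _ h2 ih =>
      exact Relation.ReflTransGen.head ⟨h2.2.1, h2.1, hsym _ _ h2.2.2⟩ ih

lemma GReach.mono {t : Finset V} (hst : s ⊆ t) {x y : V} (h : GReach A s x y) :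
    GReach A t x y :=
  Relation.ReflTransGen.mono (fun _ _ h => ⟨hst h.1, hst h.2.1, h.2.2⟩) x y h

lemma GReach.mem {x y : V} (h : GReach A s x y) : x = y ∨ (x ∈ s ∧ y ∈ s) := by
  induction h with
  | refl => exact Or.inl rfl
  | tail h1 h2 ih =>
      refine Or.inr ⟨?_, h2.2.1⟩
      rcases ih with rfl | ⟨h3, _⟩
      · exact h2.1
      · exact h3

lemma greach_eq_of_no_edge {B : V → V → Prop} {v y : V} (h : ∀ w ∈ s, ¬ B v w)
    (hr : GReach B s v y) : v = y := by
  rcases Relation.ReflTransGen.cases_head hr with h1 | ⟨c, hc, _⟩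
  · exact h1
  · exact absurd hc.2.2 (h c hc.2.1)

lemma noP4_mono {t : Finset V} (hst : s ⊆ t) (h : NoP4 A t) : NoP4 A s := by
  rintro ⟨a, b, c, d, ha, hb, hc, hd, rest⟩
  exact h ⟨a, b, c, d, hst ha, hst hb, hst hc, hst hd, rest⟩

lemma noP4_compl (hsym : ∀ x y, A x y → A y x) (h : NoP4 A s) : NoP4 (GCompl A) s := by
  rintro ⟨a, b, c, d, ha, hb, hc, hd, e1, e2, e3, m1, m2, m3, d1, d2, d3⟩
  have A1 : A a c := by by_contra h'; exact m1 ⟨d1, h'⟩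
  have A2 : A b d := by by_contra h'; exact m2 ⟨d2, h'⟩
  have A3 : A a d := by by_contra h'; exact m3 ⟨d3, h'⟩
  exact h ⟨c, a, d, b, hc, ha, hd, hb, hsym _ _ A1, A3, hsym _ _ A2,
    e3.2, e1.2, fun hcb => e2.2 (hsym _ _ hcb), e3.1, e1.1, fun hcb => e2.1 hcb.symm⟩

lemma gcompl_gcompl (hirr : ∀ x y, A x y → x ≠ y) : GCompl (GCompl A) = A := by
  funext x y; unfold GCompl
  simp only [eq_iff_iff]
  constructor
  · rintro ⟨hne, h⟩
    by_contra h'; exact h ⟨hne, h'⟩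
  · intro h; exact ⟨hirr _ _ h, fun h' => h'.2 h⟩

/-- Main step: if `s.erase v` is disconnected w.r.t. `A`, then `s` is
disconnected w.r.t. `A` or its complement. -/
lemma seinsche_step (hsym : ∀ x y, A x y → A y x) (v : V) (hv : v ∈ s)
    (hP4 : NoP4 A s) (hd : GDisconn A (s.erase v)) :
    GDisconn A s ∨ GDisconn (GCompl A) s := by
  obtain ⟨x0, hx0, y0, hy0, hxy⟩ := hd
  have hx0s : x0 ∈ s := mem_of_mem_erase hx0
  have hvs' : v ∉ s.erase v := notMem_erase _ _
  by_cases hcompt : ∃ z ∈ s.erase v, ∀ w ∈ s.erase v, GReach A (s.erase v) z w → ¬ A v w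
  · -- a component with no neighbour of v : `s` is disconnected
    obtain ⟨z, hz, hno⟩ := hcompt
    have ht : ∃ t ∈ s.erase v, ¬ GReach A (s.erase v) z t := by
      by_contra h
      push_neg at h
      exact hxy (((h x0 hx0).symm hsym).trans (h y0 hy0))
    obtain ⟨t, hts, hzt⟩ := ht
    left
    refine ⟨z, mem_of_mem_erase hz, t, mem_of_mem_erase hts, fun hr => hzt ?_⟩
    have confined : ∀ y, GReach A s z y → GReach A (s.erase v) z y := by
      intro y hy
      induction hy with
      | refl => exact Relation.ReflTransGen.refl
      | @tail b c h1 h2 ih =>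
          obtain ⟨hb, hc, hA⟩ := h2
          have hbs' : b ∈ s.erase v := by
            rcases ih.mem with rfl | ⟨_, h⟩
            · exact hz
            · exact h
          have hcs' : c ∈ s.erase v := by
            rcases eq_or_ne c v with rfl | hne
            · exact absurd (hsym _ _ hA) (hno _ hbs' ih)
            · exact Finset.mem_erase.mpr ⟨hne, hc⟩
          exact ih.tail ⟨hbs', hcs', hA⟩
    exact confined t hr
  · push_neg at hcompt
    by_cases hall : ∀ x ∈ s.erase v, A v x
    · -- v adjacent to everything: complement disconnected
      right
      refine ⟨v, hv, x0, hx0s, fun hr => ?_⟩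
      have : v = x0 := by
        refine greach_eq_of_no_edge (fun w hw hBvw => ?_) hr
        rcases eq_or_ne w v with rfl | hne
        · exact hBvw.1 rfl
        · exact hBvw.2 (hall w (Finset.mem_erase.mpr ⟨hne, hw⟩))
      exact hvs' (this ▸ hx0)
    · -- derive a P4, contradiction
      exfalso
      push_neg at hall
      obtain ⟨x, hx, hnvx⟩ := hall
      obtain ⟨w, hw, hxw, hAvw⟩ := hcompt x hx
      have boundary : ∀ y, GReach A (s.erase v) w y → ¬ A v y → ∃ a b,
          a ∈ s.erase v ∧ b ∈ s.erase v ∧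
          A v a ∧ ¬ A v b ∧ A a b ∧ GReach A (s.erase v) w a ∧
          GReach A (s.erase v) w b := by
        intro y hy
        induction hy with
        | refl => intro h; exact absurd hAvw h
        | @tail p q h1 h2 ih =>
            intro hny
            by_cases hmid : A v p
            · exact ⟨p, q, h2.1, h2.2.1, hmid, hny, h2.2.2, h1, h1.tail h2⟩
            · exact ih hmid
      obtain ⟨a, b, has, hbs, hva, hnvb, hab, hwa, hwb⟩ :=
        boundary x (hxw.symm hsym) hnvx
      have hxa : GReach A (s.erase v) x a := hxw.trans hwa
      have hxb : GReach A (s.erase v) x b := hxw.trans hwb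
      have ht : ∃ t ∈ s.erase v, ¬ GReach A (s.erase v) x t := by
        by_cases h1 : GReach A (s.erase v) x x0
        · exact ⟨y0, hy0, fun h => hxy ((h1.symm hsym).trans h)⟩
        · exact ⟨x0, hx0, h1⟩
      obtain ⟨t, hts, hxt⟩ := ht
      obtain ⟨y, hy, hty, hAvy⟩ := hcompt t hts
      have hyt : GReach A (s.erase v) y t := hty.symm hsym
      have hxny : ∀ u, GReach A (s.erase v) x u → u ≠ y := by
        rintro u hu rfl
        exact hxt (hu.trans hyt)
      have hnya : ¬ A y a := fun h => hxny _ (hxa.tail ⟨has, hy, hsym _ _ h⟩) rfl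
      have hnyb : ¬ A y b := fun h => hxny _ (hxb.tail ⟨hbs, hy, hsym _ _ h⟩) rfl
      have hyna : y ≠ a := fun h => hxny a hxa h.symm
      have hynb : y ≠ b := fun h => hxny b hxb h.symm
      have hvnb : v ≠ b := fun h => hvs' (h ▸ hbs)
      exact hP4 ⟨y, v, a, b, mem_of_mem_erase hy, hv, mem_of_mem_erase has,
        mem_of_mem_erase hbs, hsym _ _ hAvy, hva, hab, hnya, hnvb, hnyb,
        hyna, hvnb, hynb⟩

lemma gcompl_symm (hsym : ∀ x y, A x y → A y x) :
    ∀ x y, GCompl A x y → GCompl A y x :=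
  fun _ _ h => ⟨h.1.symm, fun h' => h.2 (hsym _ _ h')⟩

theorem seinsche : ∀ (m : ℕ) (A : V → V → Prop),
    (∀ x y, A x y → A y x) → (∀ x y, A x y → x ≠ y) →
    ∀ s : Finset V, s.card ≤ m → 2 ≤ s.card → NoP4 A s →
    GDisconn A s ∨ GDisconn (GCompl A) s := by
  intro m
  induction m with
  | zero => intro A _ _ s h1 h2 _; omega
  | succ m ih =>
      intro A hsym hirr s hle h2 hP4
      by_cases hsmall : s.card ≤ m
      · exact ih A hsym hirr s hsmall h2 hP4
      · rcases eq_or_lt_of_le h2 with hcard2 | hcard3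
        · -- two-element case
          obtain ⟨x, y, hne, rfl⟩ := Finset.card_eq_two.mp hcard2.symm
          have hxm : x ∈ ({x, y} : Finset V) := by simp
          have hym : y ∈ ({x, y} : Finset V) := by simp
          by_cases hA : A x y
          · right
            refine ⟨x, hxm, y, hym, fun hr => hne (greach_eq_of_no_edge ?_ hr)⟩
            intro w hw hB
            rcases Finset.mem_insert.mp hw with rfl | hw
            · exact hB.1 rfl
            · rw [Finset.mem_singleton.mp hw] at hB; exact hB.2 hA
          · left
            refine ⟨x, hxm, y, hym, fun hr => hne (greach_eq_of_no_edge ?_ hr)⟩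
            intro w hw hB
            rcases Finset.mem_insert.mp hw with rfl | hw
            · exact hirr _ _ hB rfl
            · rw [Finset.mem_singleton.mp hw] at hB; exact hA hB
        · -- at least three elements
          have hsne : s.Nonempty := Finset.card_pos.mp (by omega)
          obtain ⟨v, hv⟩ := hsne
          have hcarde : (s.erase v).card = s.card - 1 := Finset.card_erase_of_mem hv
          have hP4' : NoP4 A (s.erase v) := noP4_mono (Finset.erase_subset _ _) hP4
          have e1 : (s.erase v).card ≤ m := by rw [hcarde]; omega
          have e2 : 2 ≤ (s.erase v).card := by rw [hcarde]; omega
          rcases ih A hsym hirr (s.erase v) e1 e2 hP4' with hd | hd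
          · exact seinsche_step hsym v hv hP4 hd
          · rcases seinsche_step (A := GCompl A) (gcompl_symm hsym) v hv
              (noP4_compl hsym hP4) hd with h | h
            · exact Or.inr h
            · rw [gcompl_gcompl hirr] at h
              exact Or.inl h
end Graph

section Perm
variable {n : ℕ}

def SepBad {n : ℕ} (π : Equiv.Perm (Fin n)) : Prop :=
  ∃ i₁ i₂ i₃ i₄ : Fin n, i₁ < i₂ ∧ i₂ < i₃ ∧ i₃ < i₄ ∧
    ((π i₂ < π i₄ ∧ π i₄ < π i₁ ∧ π i₁ < π i₃) ∨
     (π i₃ < π i₁ ∧ π i₁ < π i₄ ∧ π i₄ < π i₂))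

def InvAdj (π : Equiv.Perm (Fin n)) : Fin n → Fin n → Prop := fun u w =>
  (u < w ∧ π w < π u) ∨ (w < u ∧ π u < π w)

lemma invAdj_symm {π : Equiv.Perm (Fin n)} : ∀ x y, InvAdj π x y → InvAdj π y x := by
  rintro x y (⟨h1, h2⟩ | ⟨h1, h2⟩)
  · exact Or.inr ⟨h1, h2⟩
  · exact Or.inl ⟨h1, h2⟩

lemma invAdj_ne {π : Equiv.Perm (Fin n)} : ∀ x y, InvAdj π x y → x ≠ y := by
  rintro x y (⟨h1, _⟩ | ⟨h1, _⟩)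
  · exact ne_of_lt h1
  · exact (ne_of_lt h1).symm

variable {π : Equiv.Perm (Fin n)}

lemma align (hna : ¬ InvAdj π x y) (hxy : x < y) : π x < π y := by
  rcases lt_trichotomy (π x) (π y) with h | h | h
  · exact h
  · exact absurd (π.injective h) (ne_of_lt hxy)
  · exact absurd (Or.inl ⟨hxy, h⟩) hna

lemma edgeLT (he : InvAdj π x y) (hxy : x < y) : π y < π x := by
  rcases he with ⟨_, h⟩ | ⟨h, _⟩
  · exact h
  · exact absurd hxy (asymm h)

lemma edgeGT (he : InvAdj π x y) (hyx : y < x) : π x < π y := by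
  rcases he with ⟨h, _⟩ | ⟨_, h⟩
  · exact absurd hyx (asymm h)
  · exact h

lemma sepBad_of_p4_aux {a b c d : Fin n}
    (e1 : InvAdj π a b) (e2 : InvAdj π b c) (e3 : InvAdj π c d)
    (m1 : ¬ InvAdj π a c) (m2 : ¬ InvAdj π b d) (m3 : ¬ InvAdj π a d)
    (d2 : b ≠ d) (had : a < d) : SepBad π := by
  have vad : π a < π d := align m3 had
  rcases lt_trichotomy c a with hca | heq | hac
  · have h1 : π c < π a := align (fun h => m1 (invAdj_symm _ _ h)) hca
    have h2 : π d < π c := edgeLT e3 (hca.trans had)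
    exact absurd ((h1.trans vad).trans h2) (lt_irrefl _)
  · subst heq
    exact absurd e3 m3
  · rcases lt_trichotomy c d with hcd | heq | hdc
    · -- a < c < d
      have hvac : π a < π c := align m1 hac
      have hvdc : π d < π c := edgeLT e3 hcd
      rcases lt_trichotomy b a with hba | heq | hab
      · have h1 : π c < π b := edgeLT e2 (hba.trans hac)
        have h2 : π b < π d := align m2 (hba.trans had)
        exact absurd (h1.trans (h2.trans hvdc)) (lt_irrefl _)
      · subst heq; exact absurd e1 (fun h => invAdj_ne _ _ h rfl)
      · have hvba : π b < π a := edgeLT e1 hab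
        rcases lt_trichotomy b c with hbc | heq | hcb
        · have h1 : π c < π b := edgeLT e2 hbc
          exact absurd (h1.trans (hvba.trans hvac)) (lt_irrefl _)
        · subst heq; exact absurd e2 (fun h => invAdj_ne _ _ h rfl)
        · rcases lt_trichotomy b d with hbd | heq | hdb
          · exact ⟨a, c, b, d, hac, hcb, hbd, Or.inr ⟨hvba, vad, hvdc⟩⟩
          · exact absurd heq d2
          · have h1 : π d < π b := align (fun h => m2 (invAdj_symm _ _ h)) hdb
            exact absurd ((hvba.trans vad).trans h1) (lt_irrefl _)
    · subst heq; exact absurd e3 (fun h => invAdj_ne _ _ h rfl)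
    · -- a < c, d < c
      have hvac : π a < π c := align m1 hac
      have hvcd : π c < π d := edgeGT e3 hdc
      rcases lt_trichotomy b a with hba | heq | hab
      · exact ⟨b, a, d, c, hba, had, hdc,
          Or.inl ⟨hvac, edgeLT e2 (hba.trans (had.trans hdc)),
            align m2 (hba.trans had)⟩⟩
      · subst heq; exact absurd e1 (fun h => invAdj_ne _ _ h rfl)
      · have hvba : π b < π a := edgeLT e1 hab
        rcases lt_trichotomy b d with hbd | heq | hdb
        · have h1 : π c < π b := edgeLT e2 (hbd.trans hdc)
          exact absurd ((hvac.trans h1).trans hvba) (lt_irrefl _)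
        · exact absurd heq d2
        · have h1 : π d < π b := align (fun h => m2 (invAdj_symm _ _ h)) hdb
          exact absurd (((hvba.trans hvac).trans hvcd).trans h1) (lt_irrefl _)

lemma sepBad_of_p4 {a b c d : Fin n}
    (e1 : InvAdj π a b) (e2 : InvAdj π b c) (e3 : InvAdj π c d)
    (m1 : ¬ InvAdj π a c) (m2 : ¬ InvAdj π b d) (m3 : ¬ InvAdj π a d)
    (d1 : a ≠ c) (d2 : b ≠ d) (d3 : a ≠ d) : SepBad π := by
  rcases lt_or_gt_of_ne d3 with h | h
  · exact sepBad_of_p4_aux e1 e2 e3 m1 m2 m3 d2 h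
  · exact sepBad_of_p4_aux (invAdj_symm _ _ e3) (invAdj_symm _ _ e2)
      (invAdj_symm _ _ e1) (fun h' => m2 (invAdj_symm _ _ h'))
      (fun h' => m1 (invAdj_symm _ _ h')) (fun h' => m3 (invAdj_symm _ _ h'))
      d1.symm h
end Perm

section Decomp
variable {n : ℕ} {π : Equiv.Perm (Fin n)}
open Finset

def PlusAt {n : ℕ} (π : Equiv.Perm (Fin n)) (k : ℕ) : Prop :=
  ∀ i j : Fin n, (i : ℕ) < k → k ≤ (j : ℕ) → π i < π j

def MinusAt {n : ℕ} (π : Equiv.Perm (Fin n)) (k : ℕ) : Prop :=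
  ∀ i j : Fin n, (i : ℕ) < k → k ≤ (j : ℕ) → π j < π i

lemma not_plus_and_minus {k l : ℕ} (hk1 : 1 ≤ k) (hkn : k < n)
    (hl1 : 1 ≤ l) (hln : l < n) (hp : PlusAt π k) (hm : MinusAt π l) : False := by
  have h0 : (0:ℕ) < n := by omega
  have h1 := hp ⟨0, h0⟩ ⟨n-1, by omega⟩ (by simp; omega) (by simp; omega)
  have h2 := hm ⟨0, h0⟩ ⟨n-1, by omega⟩ (by simp; omega) (by simp; omega)
  exact absurd h1 (asymm h2)

lemma cut_of_disconn {B : Fin n → Fin n → Prop} (hsym : ∀ x y, B x y → B y x)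
    (hn : 1 ≤ n) (hd : GDisconn B Finset.univ) :
    ∃ t : Fin n, 1 ≤ (t : ℕ) ∧
      (∀ i : Fin n, i < t → GReach B Finset.univ ⟨0, by omega⟩ i) ∧
      ¬ GReach B Finset.univ ⟨0, by omega⟩ t := by
  classical
  set z : Fin n := ⟨0, by omega⟩ with hz
  set T : Finset (Fin n) := univ.filter (fun u => ¬ GReach B univ z u) with hT
  have hmemT : ∀ u : Fin n, u ∈ T ↔ ¬ GReach B univ z u := by
    intro u; rw [hT]; simp
  have hne : T.Nonempty := by
    obtain ⟨x, _, y, _, hxy⟩ := hd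
    by_contra h
    rw [Finset.not_nonempty_iff_eq_empty] at h
    have hall : ∀ u : Fin n, GReach B univ z u := by
      intro u
      by_contra hu
      have : u ∈ T := (hmemT u).mpr hu
      simp [h] at this
    exact hxy (((hall x).symm hsym).trans (hall y))
  refine ⟨T.min' hne, ?_, ?_, ?_⟩
  · have hzT : z ∉ T := fun h => (hmemT z).mp h Relation.ReflTransGen.refl
    have h1 : T.min' hne ≠ z := fun h => hzT (h ▸ T.min'_mem hne)
    have h2 : (T.min' hne : ℕ) ≠ 0 := by
      intro h; exact h1 (Fin.ext (by simp [hz, h]))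
    omega
  · intro i hi
    by_contra h
    have hiT : i ∈ T := (hmemT i).mpr h
    exact absurd (T.min'_le i hiT) (not_le.mpr hi)
  · exact (hmemT _).mp (T.min'_mem hne)

lemma plusAt_of_disconn (hn : 1 ≤ n) (hd : GDisconn (InvAdj π) Finset.univ) :
    ∃ k, 1 ≤ k ∧ k < n ∧ PlusAt π k := by
  obtain ⟨t, ht1, hreach, hnreach⟩ := cut_of_disconn invAdj_symm hn hd
  set z : Fin n := ⟨0, by omega⟩
  refine ⟨(t : ℕ), ht1, t.isLt, fun i j hi hj => ?_⟩
  have hit : i < t := by rwa [Fin.lt_def]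
  have hri : GReach (InvAdj π) univ z i := hreach i hit
  by_cases hrj : GReach (InvAdj π) univ z j
  · have htj : t < j := by
      rw [Fin.lt_def]
      rcases lt_or_eq_of_le hj with h | h
      · exact h
      · exfalso
        have hjt : j = t := (Fin.ext h).symm
        rw [hjt] at hrj
        exact hnreach hrj
    have h1 : ¬ InvAdj π i t := fun hB =>
      hnreach (hri.tail ⟨mem_univ _, mem_univ _, hB⟩)
    have h2 : ¬ InvAdj π t j := fun hB =>
      hnreach ((hrj.tail ⟨mem_univ _, mem_univ _, invAdj_symm _ _ hB⟩))
    exact (align h1 hit).trans (align h2 htj)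
  · have h1 : ¬ InvAdj π i j := fun hB =>
      hrj (hri.tail ⟨mem_univ _, mem_univ _, hB⟩)
    exact align h1 (by rw [Fin.lt_def]; omega)

lemma minusAt_of_disconn (hn : 1 ≤ n)
    (hd : GDisconn (GCompl (InvAdj π)) Finset.univ) :
    ∃ k, 1 ≤ k ∧ k < n ∧ MinusAt π k := by
  obtain ⟨t, ht1, hreach, hnreach⟩ := cut_of_disconn (gcompl_symm invAdj_symm) hn hd
  set z : Fin n := ⟨0, by omega⟩
  have noB : ∀ x y : Fin n, x ≠ y → ¬ GCompl (InvAdj π) x y → InvAdj π x y := by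
    intro x y hne h
    by_contra h'
    exact h ⟨hne, h'⟩
  refine ⟨(t : ℕ), ht1, t.isLt, fun i j hi hj => ?_⟩
  have hit : i < t := by rwa [Fin.lt_def]
  have hri := hreach i hit
  by_cases hrj : GReach (GCompl (InvAdj π)) univ z j
  · have htj : t < j := by
      rw [Fin.lt_def]
      rcases lt_or_eq_of_le hj with h | h
      · exact h
      · exfalso
        have hjt : j = t := (Fin.ext h).symm
        rw [hjt] at hrj
        exact hnreach hrj
    have h1 : InvAdj π i t := noB _ _ (ne_of_lt hit)
      (fun hB => hnreach (hri.tail ⟨mem_univ _, mem_univ _, hB⟩))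
    have h2 : InvAdj π t j := noB _ _ (ne_of_lt htj)
      (fun hB => hnreach (hrj.tail ⟨mem_univ _, mem_univ _,
        gcompl_symm invAdj_symm _ _ hB⟩))
    exact (edgeLT h2 htj).trans (edgeLT h1 hit)
  · have hij : i < j := by rw [Fin.lt_def]; omega
    have h1 : InvAdj π i j := noB _ _ (ne_of_lt hij)
      (fun hB => hrj (hri.tail ⟨mem_univ _, mem_univ _, hB⟩))
    exact edgeLT h1 hij

theorem sep_dichotomy (hn : 2 ≤ n) (hb : ¬ SepBad π) :
    ∃ k, 1 ≤ k ∧ k < n ∧ (PlusAt π k ∨ MinusAt π k) := by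
  have hP4 : NoP4 (InvAdj π) (univ : Finset (Fin n)) := by
    rintro ⟨a, b, c, d, _, _, _, _, e1, e2, e3, m1, m2, m3, d1, d2, d3⟩
    exact hb (sepBad_of_p4 e1 e2 e3 m1 m2 m3 d1 d2 d3)
  have hcard : (univ : Finset (Fin n)).card = n := by simp
  rcases seinsche n (InvAdj π) invAdj_symm invAdj_ne univ (by omega) (by omega) hP4
    with hd | hd
  · obtain ⟨k, h1, h2, h3⟩ := plusAt_of_disconn (by omega) hd
    exact ⟨k, h1, h2, Or.inl h3⟩
  · obtain ⟨k, h1, h2, h3⟩ := minusAt_of_disconn (by omega) hd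
    exact ⟨k, h1, h2, Or.inr h3⟩
end Decomp

section Sums
open Finset
variable {k m : ℕ}

def dsum (σ : Equiv.Perm (Fin k)) (τ : Equiv.Perm (Fin m)) : Equiv.Perm (Fin (k + m)) :=
  finSumFinEquiv.permCongr (σ.sumCongr τ)

def ssum (σ : Equiv.Perm (Fin k)) (τ : Equiv.Perm (Fin m)) : Equiv.Perm (Fin (k + m)) :=
  finSumFinEquiv.symm.trans ((σ.sumCongr τ).trans
    ((Equiv.sumComm (Fin k) (Fin m)).trans (finSumFinEquiv.trans
      (finCongr (Nat.add_comm m k)))))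

variable (σ : Equiv.Perm (Fin k)) (τ : Equiv.Perm (Fin m))

lemma eq_castAdd {i : Fin (k + m)} (h : (i : ℕ) < k) :
    i = Fin.castAdd m ⟨(i : ℕ), h⟩ := Fin.ext rfl

lemma eq_natAdd {i : Fin (k + m)} (h : k ≤ (i : ℕ)) :
    i = Fin.natAdd k ⟨(i : ℕ) - k, by omega⟩ := Fin.ext (by simp; omega)

lemma dsum_lt {i : Fin (k + m)} (h : (i : ℕ) < k) :
    ((dsum σ τ) i : ℕ) = σ ⟨(i : ℕ), h⟩ := by
  conv_lhs => rw [eq_castAdd h]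
  simp only [dsum, Equiv.permCongr_apply, finSumFinEquiv_symm_apply_castAdd,
    Equiv.sumCongr_apply, Sum.map_inl, finSumFinEquiv_apply_left, Fin.coe_castAdd]

lemma dsum_ge {i : Fin (k + m)} (h : k ≤ (i : ℕ)) :
    ((dsum σ τ) i : ℕ) = k + τ ⟨(i : ℕ) - k, by omega⟩ := by
  conv_lhs => rw [eq_natAdd h]
  simp only [dsum, Equiv.permCongr_apply, finSumFinEquiv_symm_apply_natAdd,
    Equiv.sumCongr_apply, Sum.map_inr, finSumFinEquiv_apply_right, Fin.coe_natAdd]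

lemma ssum_lt {i : Fin (k + m)} (h : (i : ℕ) < k) :
    ((ssum σ τ) i : ℕ) = m + σ ⟨(i : ℕ), h⟩ := by
  conv_lhs => rw [eq_castAdd h]
  simp only [ssum, Equiv.trans_apply, finSumFinEquiv_symm_apply_castAdd,
    Equiv.sumCongr_apply, Sum.map_inl, Equiv.sumComm_apply, Sum.swap_inl,
    finSumFinEquiv_apply_right, finCongr_apply, Fin.coe_cast, Fin.coe_natAdd]

lemma ssum_ge {i : Fin (k + m)} (h : k ≤ (i : ℕ)) :
    ((ssum σ τ) i : ℕ) = τ ⟨(i : ℕ) - k, by omega⟩ := by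
  conv_lhs => rw [eq_natAdd h]
  simp only [ssum, Equiv.trans_apply, finSumFinEquiv_symm_apply_natAdd,
    Equiv.sumCongr_apply, Sum.map_inr, Equiv.sumComm_apply, Sum.swap_inr,
    finSumFinEquiv_apply_left, finCongr_apply, Fin.coe_cast, Fin.coe_castAdd]

lemma dsum_ge' (j : Fin m) {i : Fin (k + m)} (hij : (i : ℕ) = k + (j : ℕ)) :
    ((dsum σ τ) i : ℕ) = k + τ j := by
  have hi : i = Fin.natAdd k j := Fin.ext (by simpa using hij)
  rw [hi]
  simp only [dsum, Equiv.permCongr_apply, finSumFinEquiv_symm_apply_natAdd,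
    Equiv.sumCongr_apply, Sum.map_inr, finSumFinEquiv_apply_right, Fin.coe_natAdd]

lemma ssum_ge' (j : Fin m) {i : Fin (k + m)} (hij : (i : ℕ) = k + (j : ℕ)) :
    ((ssum σ τ) i : ℕ) = τ j := by
  have hi : i = Fin.natAdd k j := Fin.ext (by simpa using hij)
  rw [hi]
  simp only [ssum, Equiv.trans_apply, finSumFinEquiv_symm_apply_natAdd,
    Equiv.sumCongr_apply, Sum.map_inr, Equiv.sumComm_apply, Sum.swap_inr,
    finSumFinEquiv_apply_left, finCongr_apply, Fin.coe_cast, Fin.coe_castAdd]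

lemma plusAt_dsum : PlusAt (dsum σ τ) k := by
  intro i j hi hj
  rw [Fin.lt_def, dsum_lt σ τ hi, dsum_ge σ τ hj]
  exact lt_of_lt_of_le (Fin.isLt _) (Nat.le_add_right _ _)

lemma minusAt_ssum : MinusAt (ssum σ τ) k := by
  intro i j hi hj
  rw [Fin.lt_def, ssum_lt σ τ hi, ssum_ge σ τ hj]
  exact lt_of_lt_of_le (Fin.isLt _) (Nat.le_add_right _ _)
end Sums

section Transfer
open Finset
variable {k m : ℕ} (σ : Equiv.Perm (Fin k)) (τ : Equiv.Perm (Fin m))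

lemma sepBad_iff_nat {n : ℕ} {π : Equiv.Perm (Fin n)} : SepBad π ↔
    ∃ i1 i2 i3 i4 : Fin n, (i1:ℕ) < i2 ∧ (i2:ℕ) < i3 ∧ (i3:ℕ) < i4 ∧
      (((π i2:ℕ) < π i4 ∧ (π i4:ℕ) < π i1 ∧ (π i1:ℕ) < π i3) ∨
       ((π i3:ℕ) < π i1 ∧ (π i1:ℕ) < π i4 ∧ (π i4:ℕ) < π i2)) := by
  unfold SepBad
  constructor
  · rintro ⟨i1, i2, i3, i4, a, b, c, h⟩
    exact ⟨i1, i2, i3, i4, Fin.lt_def.mp a, Fin.lt_def.mp b, Fin.lt_def.mp c, by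
      rcases h with ⟨x, y, z⟩ | ⟨x, y, z⟩
      · exact Or.inl ⟨Fin.lt_def.mp x, Fin.lt_def.mp y, Fin.lt_def.mp z⟩
      · exact Or.inr ⟨Fin.lt_def.mp x, Fin.lt_def.mp y, Fin.lt_def.mp z⟩⟩
  · rintro ⟨i1, i2, i3, i4, a, b, c, h⟩
    exact ⟨i1, i2, i3, i4, Fin.lt_def.mpr a, Fin.lt_def.mpr b, Fin.lt_def.mpr c, by
      rcases h with ⟨x, y, z⟩ | ⟨x, y, z⟩
      · exact Or.inl ⟨Fin.lt_def.mpr x, Fin.lt_def.mpr y, Fin.lt_def.mpr z⟩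
      · exact Or.inr ⟨Fin.lt_def.mpr x, Fin.lt_def.mpr y, Fin.lt_def.mpr z⟩⟩

lemma dsum_cross {x y : Fin (k+m)} (hx : (x:ℕ) < k) (hy : k ≤ (y:ℕ)) :
    ((dsum σ τ) x : ℕ) < ((dsum σ τ) y : ℕ) := by
  rw [dsum_lt σ τ hx, dsum_ge σ τ hy]
  have := (σ ⟨(x:ℕ), hx⟩).isLt
  omega

lemma ssum_cross {x y : Fin (k+m)} (hx : (x:ℕ) < k) (hy : k ≤ (y:ℕ)) :
    ((ssum σ τ) y : ℕ) < ((ssum σ τ) x : ℕ) := by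
  rw [ssum_lt σ τ hx, ssum_ge σ τ hy]
  have := (τ ⟨(y:ℕ) - k, by omega⟩).isLt
  omega

lemma sepBad_dsum_iff : SepBad (dsum σ τ) ↔ SepBad σ ∨ SepBad τ := by
  rw [sepBad_iff_nat]
  constructor
  · rintro ⟨i1, i2, i3, i4, h12, h23, h34, hpat⟩
    by_cases h4 : (i4 : ℕ) < k
    · left
      rw [sepBad_iff_nat]
      have e1 := dsum_lt σ τ (show (i1:ℕ) < k by omega)
      have e2 := dsum_lt σ τ (show (i2:ℕ) < k by omega)
      have e3 := dsum_lt σ τ (show (i3:ℕ) < k by omega)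
      have e4 := dsum_lt σ τ h4
      refine ⟨⟨i1, by omega⟩, ⟨i2, by omega⟩, ⟨i3, by omega⟩, ⟨i4, h4⟩,
        by simpa using h12, by simpa using h23, by simpa using h34, ?_⟩
      rcases hpat with ⟨a, b, c⟩ | ⟨a, b, c⟩
      · exact Or.inl ⟨by omega, by omega, by omega⟩
      · exact Or.inr ⟨by omega, by omega, by omega⟩
    · by_cases h1 : k ≤ (i1 : ℕ)
      · right
        rw [sepBad_iff_nat]
        have l1 := i1.isLt; have l2 := i2.isLt; have l3 := i3.isLt; have l4 := i4.isLt
        obtain ⟨j1, hj1⟩ : ∃ j : Fin m, (i1:ℕ) = k + (j:ℕ) :=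
          ⟨⟨(i1:ℕ) - k, by omega⟩, by simp; omega⟩
        obtain ⟨j2, hj2⟩ : ∃ j : Fin m, (i2:ℕ) = k + (j:ℕ) :=
          ⟨⟨(i2:ℕ) - k, by omega⟩, by simp; omega⟩
        obtain ⟨j3, hj3⟩ : ∃ j : Fin m, (i3:ℕ) = k + (j:ℕ) :=
          ⟨⟨(i3:ℕ) - k, by omega⟩, by simp; omega⟩
        obtain ⟨j4, hj4⟩ : ∃ j : Fin m, (i4:ℕ) = k + (j:ℕ) :=
          ⟨⟨(i4:ℕ) - k, by omega⟩, by simp; omega⟩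
        have e1 := dsum_ge' σ τ j1 hj1
        have e2 := dsum_ge' σ τ j2 hj2
        have e3 := dsum_ge' σ τ j3 hj3
        have e4 := dsum_ge' σ τ j4 hj4
        refine ⟨j1, j2, j3, j4, by omega, by omega, by omega, ?_⟩
        rcases hpat with ⟨a, b, c⟩ | ⟨a, b, c⟩
        · exact Or.inl ⟨by omega, by omega, by omega⟩
        · exact Or.inr ⟨by omega, by omega, by omega⟩
      · exfalso
        push_neg at h1 h4
        rcases hpat with ⟨a, b, c⟩ | ⟨a, b, c⟩
        · have c14 := dsum_cross σ τ h1 h4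
          omega
        · by_cases h3 : (i3 : ℕ) < k
          · have c24 := dsum_cross σ τ (show (i2:ℕ) < k by omega) h4
            omega
          · have c13 := dsum_cross σ τ h1 (not_lt.mp h3)
            omega
  · rintro (h | h)
    · rw [sepBad_iff_nat] at h
      obtain ⟨i1, i2, i3, i4, h12, h23, h34, hpat⟩ := h
      have e : ∀ x : Fin k, ((dsum σ τ) (Fin.castAdd m x) : ℕ) = σ x := by
        intro x
        have hx : ((Fin.castAdd m x : Fin (k+m)) : ℕ) < k := by simpa using x.isLt
        rw [dsum_lt σ τ hx]
        have hxx : (⟨((Fin.castAdd m x : Fin (k+m)) : ℕ), hx⟩ : Fin k) = x :=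
          Fin.ext rfl
        rw [hxx]
      refine ⟨Fin.castAdd m i1, Fin.castAdd m i2, Fin.castAdd m i3, Fin.castAdd m i4,
        by simpa using h12, by simpa using h23, by simpa using h34, ?_⟩
      rcases hpat with ⟨a, b, c⟩ | ⟨a, b, c⟩
      · exact Or.inl ⟨by rw [e, e]; omega,
          by rw [e, e]; omega, by rw [e, e]; omega⟩
      · exact Or.inr ⟨by rw [e, e]; omega,
          by rw [e, e]; omega, by rw [e, e]; omega⟩
    · rw [sepBad_iff_nat] at h
      obtain ⟨i1, i2, i3, i4, h12, h23, h34, hpat⟩ := h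
      have e : ∀ x : Fin m, ((dsum σ τ) (Fin.natAdd k x) : ℕ) = k + τ x := by
        intro x
        have hx : k ≤ ((Fin.natAdd k x : Fin (k+m)) : ℕ) := by simp
        rw [dsum_ge σ τ hx]
        have hxx : (⟨((Fin.natAdd k x : Fin (k+m)) : ℕ) - k, by omega⟩ : Fin m) = x :=
          Fin.ext (by simp)
        rw [hxx]
      refine ⟨Fin.natAdd k i1, Fin.natAdd k i2, Fin.natAdd k i3, Fin.natAdd k i4,
        by simpa using h12, by simpa using h23, by simpa using h34, ?_⟩
      rcases hpat with ⟨a, b, c⟩ | ⟨a, b, c⟩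
      · exact Or.inl ⟨by rw [e, e]; omega,
          by rw [e, e]; omega, by rw [e, e]; omega⟩
      · exact Or.inr ⟨by rw [e, e]; omega,
          by rw [e, e]; omega, by rw [e, e]; omega⟩

lemma sepBad_ssum_iff : SepBad (ssum σ τ) ↔ SepBad σ ∨ SepBad τ := by
  rw [sepBad_iff_nat]
  constructor
  · rintro ⟨i1, i2, i3, i4, h12, h23, h34, hpat⟩
    by_cases h4 : (i4 : ℕ) < k
    · left
      rw [sepBad_iff_nat]
      have e1 := ssum_lt σ τ (show (i1:ℕ) < k by omega)
      have e2 := ssum_lt σ τ (show (i2:ℕ) < k by omega)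
      have e3 := ssum_lt σ τ (show (i3:ℕ) < k by omega)
      have e4 := ssum_lt σ τ h4
      refine ⟨⟨i1, by omega⟩, ⟨i2, by omega⟩, ⟨i3, by omega⟩, ⟨i4, h4⟩,
        by simpa using h12, by simpa using h23, by simpa using h34, ?_⟩
      rcases hpat with ⟨a, b, c⟩ | ⟨a, b, c⟩
      · exact Or.inl ⟨by omega, by omega, by omega⟩
      · exact Or.inr ⟨by omega, by omega, by omega⟩
    · by_cases h1 : k ≤ (i1 : ℕ)
      · right
        rw [sepBad_iff_nat]
        have l1 := i1.isLt; have l2 := i2.isLt; have l3 := i3.isLt; have l4 := i4.isLt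
        obtain ⟨j1, hj1⟩ : ∃ j : Fin m, (i1:ℕ) = k + (j:ℕ) :=
          ⟨⟨(i1:ℕ) - k, by omega⟩, by simp; omega⟩
        obtain ⟨j2, hj2⟩ : ∃ j : Fin m, (i2:ℕ) = k + (j:ℕ) :=
          ⟨⟨(i2:ℕ) - k, by omega⟩, by simp; omega⟩
        obtain ⟨j3, hj3⟩ : ∃ j : Fin m, (i3:ℕ) = k + (j:ℕ) :=
          ⟨⟨(i3:ℕ) - k, by omega⟩, by simp; omega⟩
        obtain ⟨j4, hj4⟩ : ∃ j : Fin m, (i4:ℕ) = k + (j:ℕ) :=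
          ⟨⟨(i4:ℕ) - k, by omega⟩, by simp; omega⟩
        have e1 := ssum_ge' σ τ j1 hj1
        have e2 := ssum_ge' σ τ j2 hj2
        have e3 := ssum_ge' σ τ j3 hj3
        have e4 := ssum_ge' σ τ j4 hj4
        refine ⟨j1, j2, j3, j4, by omega, by omega, by omega, ?_⟩
        rcases hpat with ⟨a, b, c⟩ | ⟨a, b, c⟩
        · exact Or.inl ⟨by omega, by omega, by omega⟩
        · exact Or.inr ⟨by omega, by omega, by omega⟩
      · exfalso
        push_neg at h1 h4
        rcases hpat with ⟨a, b, c⟩ | ⟨a, b, c⟩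
        · by_cases h3 : (i3 : ℕ) < k
          · have c24 := ssum_cross σ τ (show (i2:ℕ) < k by omega) h4
            omega
          · have c13 := ssum_cross σ τ h1 (not_lt.mp h3)
            omega
        · have c14 := ssum_cross σ τ h1 h4
          omega
  · rintro (h | h)
    · rw [sepBad_iff_nat] at h
      obtain ⟨i1, i2, i3, i4, h12, h23, h34, hpat⟩ := h
      have e : ∀ x : Fin k, ((ssum σ τ) (Fin.castAdd m x) : ℕ) = m + σ x := by
        intro x
        have hx : ((Fin.castAdd m x : Fin (k+m)) : ℕ) < k := by simpa using x.isLt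
        rw [ssum_lt σ τ hx]
        have hxx : (⟨((Fin.castAdd m x : Fin (k+m)) : ℕ), hx⟩ : Fin k) = x :=
          Fin.ext rfl
        rw [hxx]
      refine ⟨Fin.castAdd m i1, Fin.castAdd m i2, Fin.castAdd m i3, Fin.castAdd m i4,
        by simpa using h12, by simpa using h23, by simpa using h34, ?_⟩
      rcases hpat with ⟨a, b, c⟩ | ⟨a, b, c⟩
      · exact Or.inl ⟨by rw [e, e]; omega,
          by rw [e, e]; omega, by rw [e, e]; omega⟩
      · exact Or.inr ⟨by rw [e, e]; omega,
          by rw [e, e]; omega, by rw [e, e]; omega⟩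
    · rw [sepBad_iff_nat] at h
      obtain ⟨i1, i2, i3, i4, h12, h23, h34, hpat⟩ := h
      have e : ∀ x : Fin m, ((ssum σ τ) (Fin.natAdd k x) : ℕ) = τ x := by
        intro x
        have hx : k ≤ ((Fin.natAdd k x : Fin (k+m)) : ℕ) := by simp
        rw [ssum_ge σ τ hx]
        have hxx : (⟨((Fin.natAdd k x : Fin (k+m)) : ℕ) - k, by omega⟩ : Fin m) = x :=
          Fin.ext (by simp)
        rw [hxx]
      refine ⟨Fin.natAdd k i1, Fin.natAdd k i2, Fin.natAdd k i3, Fin.natAdd k i4,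
        by simpa using h12, by simpa using h23, by simpa using h34, ?_⟩
      rcases hpat with ⟨a, b, c⟩ | ⟨a, b, c⟩
      · exact Or.inl ⟨by rw [e, e]; omega,
          by rw [e, e]; omega, by rw [e, e]; omega⟩
      · exact Or.inr ⟨by rw [e, e]; omega,
          by rw [e, e]; omega, by rw [e, e]; omega⟩
end Transfer

section ValueBounds
open Finset
variable {k m : ℕ} {π : Equiv.Perm (Fin (k + m))}

private lemma image_card_le {s t : Finset (Fin (k+m))}
    (h : ∀ x ∈ s, π x ∈ t) : s.card ≤ t.card := by
  have h1 : s.image π ⊆ t := by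
    intro y hy
    obtain ⟨x, hx, rfl⟩ := Finset.mem_image.mp hy
    exact h x hx
  have h2 := Finset.card_le_card h1
  rwa [Finset.card_image_of_injective _ π.injective] at h2

lemma plusAt_lt (h : PlusAt π k) {i : Fin (k + m)} (hi : (i : ℕ) < k) :
    (π i : ℕ) < k := by
  rcases Nat.eq_zero_or_pos m with rfl | hm
  · have := (π i).isLt; omega
  · have hcard : (Finset.Ici (⟨k, by omega⟩ : Fin (k+m))).card = m := by
      rw [Fin.card_Ici]; simp
    have hsub : (Finset.Ici (⟨k, by omega⟩ : Fin (k+m))).card ≤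
        (Finset.Ioi (π i)).card := by
      apply image_card_le
      intro x hx
      rw [Finset.mem_Ici] at hx
      rw [Finset.mem_Ioi]
      exact h i x hi (by exact hx)
    rw [hcard, Fin.card_Ioi] at hsub
    have := (π i).isLt
    omega

lemma plusAt_ge (h : PlusAt π k) {i : Fin (k + m)} (hi : k ≤ (i : ℕ)) :
    k ≤ (π i : ℕ) := by
  have hm : 0 < m := by have := i.isLt; omega
  have hcard : (Finset.Iio (⟨k, by omega⟩ : Fin (k+m))).card = k := by
    rw [Fin.card_Iio]
  have hsub : (Finset.Iio (⟨k, by omega⟩ : Fin (k+m))).card ≤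
      (Finset.Iio (π i)).card := by
    apply image_card_le
    intro x hx
    rw [Finset.mem_Iio] at hx ⊢
    exact h x i (by exact hx) hi
  rw [hcard, Fin.card_Iio] at hsub
  exact hsub

lemma minusAt_ge (h : MinusAt π k) {i : Fin (k + m)} (hi : (i : ℕ) < k) :
    m ≤ (π i : ℕ) := by
  rcases Nat.eq_zero_or_pos m with rfl | hm
  · omega
  · have hcard : (Finset.Ici (⟨k, by omega⟩ : Fin (k+m))).card = m := by
      rw [Fin.card_Ici]; simp
    have hsub : (Finset.Ici (⟨k, by omega⟩ : Fin (k+m))).card ≤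
        (Finset.Iio (π i)).card := by
      apply image_card_le
      intro x hx
      rw [Finset.mem_Ici] at hx
      rw [Finset.mem_Iio]
      exact h i x hi (by exact hx)
    rw [hcard, Fin.card_Iio] at hsub
    exact hsub

lemma minusAt_lt (h : MinusAt π k) {i : Fin (k + m)} (hi : k ≤ (i : ℕ)) :
    (π i : ℕ) < m := by
  have hm : 0 < m := by have := i.isLt; omega
  have hk : k < k + m := by omega
  have hcard : (Finset.Iio (⟨k, hk⟩ : Fin (k+m))).card = k := by
    rw [Fin.card_Iio]
  have hsub : (Finset.Iio (⟨k, hk⟩ : Fin (k+m))).card ≤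
      (Finset.Ioi (π i)).card := by
    apply image_card_le
    intro x hx
    rw [Finset.mem_Iio] at hx
    rw [Finset.mem_Ioi]
    exact h x i (by exact hx) hi
  rw [hcard, Fin.card_Ioi] at hsub
  have := (π i).isLt
  omega
end ValueBounds

section DecompEquiv
open Finset
variable {k m : ℕ}

noncomputable def dFst (π : Equiv.Perm (Fin (k + m))) (h : PlusAt π k) :
    Equiv.Perm (Fin k) :=
  Equiv.ofBijective
    (fun i => ⟨(π (Fin.castAdd m i) : ℕ), plusAt_lt h (by simpa using i.isLt)⟩)
    (Finite.injective_iff_bijective.mp (by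
      intro a b hab
      have h1 : (π (Fin.castAdd m a) : ℕ) = (π (Fin.castAdd m b) : ℕ) := by
        simpa using congrArg Fin.val hab
      have h2 := π.injective (Fin.ext h1)
      exact Fin.ext (by simpa using congrArg Fin.val h2)))

noncomputable def dSnd (π : Equiv.Perm (Fin (k + m))) (h : PlusAt π k) :
    Equiv.Perm (Fin m) :=
  Equiv.ofBijective
    (fun j => ⟨(π (Fin.natAdd k j) : ℕ) - k, by
      have h1 : k ≤ (π (Fin.natAdd k j) : ℕ) := plusAt_ge h (by simp)
      have h2 := (π (Fin.natAdd k j)).isLt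
      omega⟩)
    (Finite.injective_iff_bijective.mp (by
      intro a b hab
      have ha : k ≤ (π (Fin.natAdd k a) : ℕ) := plusAt_ge h (by simp)
      have hb : k ≤ (π (Fin.natAdd k b) : ℕ) := plusAt_ge h (by simp)
      have h1 : (π (Fin.natAdd k a) : ℕ) - k = (π (Fin.natAdd k b) : ℕ) - k := by
        simpa using congrArg Fin.val hab
      have h2 := π.injective (Fin.ext
        (by omega : (π (Fin.natAdd k a) : ℕ) = (π (Fin.natAdd k b) : ℕ)))
      exact Fin.ext (by simpa using congrArg Fin.val h2)))

lemma dFst_apply (π : Equiv.Perm (Fin (k + m))) (h : PlusAt π k) (i : Fin k) :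
    ((dFst π h) i : ℕ) = (π (Fin.castAdd m i) : ℕ) := rfl

lemma dSnd_apply (π : Equiv.Perm (Fin (k + m))) (h : PlusAt π k) (j : Fin m) :
    ((dSnd π h) j : ℕ) = (π (Fin.natAdd k j) : ℕ) - k := rfl

lemma dsum_dFst_dSnd (π : Equiv.Perm (Fin (k + m))) (h : PlusAt π k) :
    dsum (dFst π h) (dSnd π h) = π := by
  apply Equiv.ext
  intro x
  apply Fin.ext
  by_cases hx : (x : ℕ) < k
  · rw [dsum_lt _ _ hx, dFst_apply, ← eq_castAdd hx]
  · push_neg at hx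
    rw [dsum_ge _ _ hx, dSnd_apply, ← eq_natAdd hx]
    have := plusAt_ge h hx
    omega

lemma dFst_dsum (σ : Equiv.Perm (Fin k)) (τ : Equiv.Perm (Fin m)) :
    dFst (dsum σ τ) (plusAt_dsum σ τ) = σ := by
  apply Equiv.ext
  intro i
  apply Fin.ext
  rw [dFst_apply]
  rw [dsum_lt _ _ (show ((Fin.castAdd m i : Fin (k+m)) : ℕ) < k by simpa using i.isLt)]
  congr 2

lemma dSnd_dsum (σ : Equiv.Perm (Fin k)) (τ : Equiv.Perm (Fin m)) :
    dSnd (dsum σ τ) (plusAt_dsum σ τ) = τ := by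
  apply Equiv.ext
  intro j
  apply Fin.ext
  rw [dSnd_apply]
  rw [dsum_ge' σ τ j (by simp)]
  omega

noncomputable def dEquiv :
    {π : Equiv.Perm (Fin (k + m)) // PlusAt π k} ≃
      Equiv.Perm (Fin k) × Equiv.Perm (Fin m) where
  toFun p := (dFst p.1 p.2, dSnd p.1 p.2)
  invFun q := ⟨dsum q.1 q.2, plusAt_dsum q.1 q.2⟩
  left_inv p := Subtype.ext (dsum_dFst_dSnd p.1 p.2)
  right_inv q := by
    ext1
    · exact dFst_dsum q.1 q.2
    · exact dSnd_dsum q.1 q.2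

noncomputable def sFst (π : Equiv.Perm (Fin (k + m))) (h : MinusAt π k) :
    Equiv.Perm (Fin k) :=
  Equiv.ofBijective
    (fun i => ⟨(π (Fin.castAdd m i) : ℕ) - m, by
      have h1 : m ≤ (π (Fin.castAdd m i) : ℕ) := minusAt_ge h (by simpa using i.isLt)
      have h2 := (π (Fin.castAdd m i)).isLt
      omega⟩)
    (Finite.injective_iff_bijective.mp (by
      intro a b hab
      have ha : m ≤ (π (Fin.castAdd m a) : ℕ) := minusAt_ge h (by simpa using a.isLt)
      have hb : m ≤ (π (Fin.castAdd m b) : ℕ) := minusAt_ge h (by simpa using b.isLt)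
      have h1 : (π (Fin.castAdd m a) : ℕ) - m = (π (Fin.castAdd m b) : ℕ) - m := by
        simpa using congrArg Fin.val hab
      have h2 := π.injective (Fin.ext
        (by omega : (π (Fin.castAdd m a) : ℕ) = (π (Fin.castAdd m b) : ℕ)))
      exact Fin.ext (by simpa using congrArg Fin.val h2)))

noncomputable def sSnd (π : Equiv.Perm (Fin (k + m))) (h : MinusAt π k) :
    Equiv.Perm (Fin m) :=
  Equiv.ofBijective
    (fun j => ⟨(π (Fin.natAdd k j) : ℕ), minusAt_lt h (by simp)⟩)
    (Finite.injective_iff_bijective.mp (by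
      intro a b hab
      have h1 : (π (Fin.natAdd k a) : ℕ) = (π (Fin.natAdd k b) : ℕ) := by
        simpa using congrArg Fin.val hab
      have h2 := π.injective (Fin.ext h1)
      exact Fin.ext (by simpa using congrArg Fin.val h2)))

lemma sFst_apply (π : Equiv.Perm (Fin (k + m))) (h : MinusAt π k) (i : Fin k) :
    ((sFst π h) i : ℕ) = (π (Fin.castAdd m i) : ℕ) - m := rfl

lemma sSnd_apply (π : Equiv.Perm (Fin (k + m))) (h : MinusAt π k) (j : Fin m) :
    ((sSnd π h) j : ℕ) = (π (Fin.natAdd k j) : ℕ) := rfl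

lemma ssum_sFst_sSnd (π : Equiv.Perm (Fin (k + m))) (h : MinusAt π k) :
    ssum (sFst π h) (sSnd π h) = π := by
  apply Equiv.ext
  intro x
  apply Fin.ext
  by_cases hx : (x : ℕ) < k
  · rw [ssum_lt _ _ hx, sFst_apply, ← eq_castAdd hx]
    have := minusAt_ge h hx
    omega
  · push_neg at hx
    rw [ssum_ge _ _ hx, sSnd_apply, ← eq_natAdd hx]

lemma sFst_ssum (σ : Equiv.Perm (Fin k)) (τ : Equiv.Perm (Fin m)) :
    sFst (ssum σ τ) (minusAt_ssum σ τ) = σ := by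
  apply Equiv.ext
  intro i
  apply Fin.ext
  rw [sFst_apply]
  rw [ssum_lt _ _ (show ((Fin.castAdd m i : Fin (k+m)) : ℕ) < k by simpa using i.isLt)]
  have h1 : (⟨((Fin.castAdd m i : Fin (k+m)) : ℕ),
      (by simpa using i.isLt : ((Fin.castAdd m i : Fin (k+m)) : ℕ) < k)⟩ : Fin k) = i :=
    Fin.ext rfl
  rw [h1]
  omega

lemma sSnd_ssum (σ : Equiv.Perm (Fin k)) (τ : Equiv.Perm (Fin m)) :
    sSnd (ssum σ τ) (minusAt_ssum σ τ) = τ := by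
  apply Equiv.ext
  intro j
  apply Fin.ext
  rw [sSnd_apply]
  rw [ssum_ge' σ τ j (by simp)]

noncomputable def sEquiv :
    {π : Equiv.Perm (Fin (k + m)) // MinusAt π k} ≃
      Equiv.Perm (Fin k) × Equiv.Perm (Fin m) where
  toFun p := (sFst p.1 p.2, sSnd p.1 p.2)
  invFun q := ⟨ssum q.1 q.2, minusAt_ssum q.1 q.2⟩
  left_inv p := Subtype.ext (ssum_sFst_sSnd p.1 p.2)
  right_inv q := by
    ext1
    · exact sFst_ssum q.1 q.2
    · exact sSnd_ssum q.1 q.2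
end DecompEquiv

section MinK
open Finset
variable {k m : ℕ} (σ : Equiv.Perm (Fin k)) (τ : Equiv.Perm (Fin m))

lemma dsum_castAdd (x : Fin k) : ((dsum σ τ) (Fin.castAdd m x) : ℕ) = σ x := by
  rw [dsum_lt σ τ (show ((Fin.castAdd m x : Fin (k+m)) : ℕ) < k by simpa using x.isLt)]
  congr 2

lemma ssum_castAdd (x : Fin k) : ((ssum σ τ) (Fin.castAdd m x) : ℕ) = m + σ x := by
  rw [ssum_lt σ τ (show ((Fin.castAdd m x : Fin (k+m)) : ℕ) < k by simpa using x.isLt)]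
  congr 3

lemma plusAt_dsum_iff {j : ℕ} (hj : j ≤ k) :
    PlusAt (dsum σ τ) j ↔ PlusAt σ j := by
  constructor
  · intro h a b ha hb
    have h1 := h (Fin.castAdd m a) (Fin.castAdd m b) (by simpa using ha)
      (by simpa using hb)
    rw [Fin.lt_def] at h1 ⊢
    rwa [dsum_castAdd, dsum_castAdd] at h1
  · intro h a b ha hb
    rw [Fin.lt_def]
    by_cases hc : (b : ℕ) < k
    · have hak : (a : ℕ) < k := by omega
      have h1 := h ⟨(a : ℕ), hak⟩ ⟨(b : ℕ), hc⟩ ha hb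
      rw [dsum_lt σ τ hak, dsum_lt σ τ hc]
      exact Fin.lt_def.mp h1
    · exact dsum_cross σ τ (by omega) (by omega)

lemma minusAt_ssum_iff {j : ℕ} (hj : j ≤ k) :
    MinusAt (ssum σ τ) j ↔ MinusAt σ j := by
  constructor
  · intro h a b ha hb
    have h1 := h (Fin.castAdd m a) (Fin.castAdd m b) (by simpa using ha)
      (by simpa using hb)
    rw [Fin.lt_def] at h1 ⊢
    rw [ssum_castAdd, ssum_castAdd] at h1
    omega
  · intro h a b ha hb
    rw [Fin.lt_def]
    by_cases hc : (b : ℕ) < k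
    · have hak : (a : ℕ) < k := by omega
      have h1 := h ⟨(a : ℕ), hak⟩ ⟨(b : ℕ), hc⟩ ha hb
      rw [ssum_lt σ τ hak, ssum_lt σ τ hc]
      have := Fin.lt_def.mp h1
      omega
    · exact ssum_cross σ τ (by omega) (by omega)

noncomputable def minK {n : ℕ} (π : Equiv.Perm (Fin n)) : ℕ :=
  sInf {j | 1 ≤ j ∧ (PlusAt π j ∨ MinusAt π j)}

variable {n : ℕ} {π : Equiv.Perm (Fin n)}

lemma plusAt_top : PlusAt π n := by
  intro i j _ hj
  exact absurd j.isLt (not_lt.mpr hj)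

lemma minK_set_nonempty (hn : 1 ≤ n) :
    {j | 1 ≤ j ∧ (PlusAt π j ∨ MinusAt π j)}.Nonempty :=
  ⟨n, hn, Or.inl plusAt_top⟩

lemma minK_spec (hn : 2 ≤ n) (hb : ¬ SepBad π) :
    1 ≤ minK π ∧ minK π < n ∧ (PlusAt π (minK π) ∨ MinusAt π (minK π)) := by
  obtain ⟨k, hk1, hkn, hk⟩ := sep_dichotomy hn hb
  have hmem := Nat.sInf_mem (minK_set_nonempty (π := π) (by omega))
  have hle : minK π ≤ k := Nat.sInf_le ⟨hk1, hk⟩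
  exact ⟨hmem.1, by omega, hmem.2⟩

lemma minK_eq_iff_plus {k : ℕ} (h : PlusAt π k) (hk1 : 1 ≤ k) (hkn : k < n) :
    minK π = k ↔ ∀ j, 1 ≤ j → j < k → ¬ PlusAt π j := by
  have hkmem : k ∈ {j | 1 ≤ j ∧ (PlusAt π j ∨ MinusAt π j)} := ⟨hk1, Or.inl h⟩
  constructor
  · intro he j hj1 hjk hP
    have hjmem : j ∈ {j | 1 ≤ j ∧ (PlusAt π j ∨ MinusAt π j)} := ⟨hj1, Or.inl hP⟩
    have := Nat.sInf_le hjmem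
    unfold minK at he
    omega
  · intro hmin
    have hdef : minK π = sInf {j | 1 ≤ j ∧ (PlusAt π j ∨ MinusAt π j)} := rfl
    have hle : minK π ≤ k := Nat.sInf_le hkmem
    have hmem := Nat.sInf_mem (⟨k, hkmem⟩ :
      {j | 1 ≤ j ∧ (PlusAt π j ∨ MinusAt π j)}.Nonempty)
    obtain ⟨h1, h2 | h2⟩ := hmem
    · rcases eq_or_lt_of_le hle with he | hlt
      · exact he
      · exact absurd h2 (hmin _ h1 hlt)
    · exact (not_plus_and_minus hk1 hkn h1 (by omega) h h2).elim

lemma minK_eq_iff_minus {k : ℕ} (h : MinusAt π k) (hk1 : 1 ≤ k) (hkn : k < n) :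
    minK π = k ↔ ∀ j, 1 ≤ j → j < k → ¬ MinusAt π j := by
  have hkmem : k ∈ {j | 1 ≤ j ∧ (PlusAt π j ∨ MinusAt π j)} := ⟨hk1, Or.inr h⟩
  constructor
  · intro he j hj1 hjk hM
    have hjmem : j ∈ {j | 1 ≤ j ∧ (PlusAt π j ∨ MinusAt π j)} := ⟨hj1, Or.inr hM⟩
    have := Nat.sInf_le hjmem
    unfold minK at he
    omega
  · intro hmin
    have hdef : minK π = sInf {j | 1 ≤ j ∧ (PlusAt π j ∨ MinusAt π j)} := rfl
    have hle : minK π ≤ k := Nat.sInf_le hkmem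
    have hmem := Nat.sInf_mem (⟨k, hkmem⟩ :
      {j | 1 ≤ j ∧ (PlusAt π j ∨ MinusAt π j)}.Nonempty)
    obtain ⟨h1, h2 | h2⟩ := hmem
    · exact (not_plus_and_minus h1 (by omega) hk1 hkn h2 h).elim
    · rcases eq_or_lt_of_le hle with he | hlt
      · exact he
      · exact absurd h2 (hmin _ h1 hlt)
end MinK

section Counting
open Finset
open scoped Classical

noncomputable def sepCount (n : ℕ) : ℕ :=
  Nat.card {π : Equiv.Perm (Fin n) // ¬ SepBad π}

noncomputable def uP (k : ℕ) : ℕ :=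
  Nat.card {σ : Equiv.Perm (Fin k) // ¬ SepBad σ ∧ ∀ j, 1 ≤ j → j < k → ¬ PlusAt σ j}

noncomputable def uM (k : ℕ) : ℕ :=
  Nat.card {σ : Equiv.Perm (Fin k) // ¬ SepBad σ ∧ ∀ j, 1 ≤ j → j < k → ¬ MinusAt σ j}

lemma nat_card_subtype {α : Type*} [Fintype α] (p : α → Prop) [DecidablePred p] :
    Nat.card {x // p x} = (univ.filter p).card := by
  rw [Nat.card_eq_fintype_card, Fintype.card_subtype]

lemma fiberP_iff {k m : ℕ} (σ : Equiv.Perm (Fin k)) (τ : Equiv.Perm (Fin m))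
    (hk : 1 ≤ k) (hm : 1 ≤ m) :
    (¬ SepBad (dsum σ τ) ∧ minK (dsum σ τ) = k) ↔
    ((¬ SepBad σ ∧ ∀ j, 1 ≤ j → j < k → ¬ PlusAt σ j) ∧ ¬ SepBad τ) := by
  have hplus := plusAt_dsum σ τ
  constructor
  · rintro ⟨hb, hmin⟩
    rw [sepBad_dsum_iff] at hb
    rw [not_or] at hb
    have hmin' := (minK_eq_iff_plus hplus hk (by omega)).mp hmin
    exact ⟨⟨hb.1, fun j h1 h2 hP => hmin' j h1 h2
      ((plusAt_dsum_iff σ τ (by omega)).mpr hP)⟩, hb.2⟩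
  · rintro ⟨⟨h1, h2⟩, h3⟩
    refine ⟨?_, (minK_eq_iff_plus hplus hk (by omega)).mpr ?_⟩
    · rw [sepBad_dsum_iff]; tauto
    · intro j hj1 hjk hP
      exact h2 j hj1 hjk ((plusAt_dsum_iff σ τ (by omega)).mp hP)

lemma fiberM_iff {k m : ℕ} (σ : Equiv.Perm (Fin k)) (τ : Equiv.Perm (Fin m))
    (hk : 1 ≤ k) (hm : 1 ≤ m) :
    (¬ SepBad (ssum σ τ) ∧ minK (ssum σ τ) = k) ↔
    ((¬ SepBad σ ∧ ∀ j, 1 ≤ j → j < k → ¬ MinusAt σ j) ∧ ¬ SepBad τ) := by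
  have hminus := minusAt_ssum σ τ
  constructor
  · rintro ⟨hb, hmin⟩
    rw [sepBad_ssum_iff] at hb
    rw [not_or] at hb
    have hmin' := (minK_eq_iff_minus hminus hk (by omega)).mp hmin
    exact ⟨⟨hb.1, fun j h1 h2 hM => hmin' j h1 h2
      ((minusAt_ssum_iff σ τ (by omega)).mpr hM)⟩, hb.2⟩
  · rintro ⟨⟨h1, h2⟩, h3⟩
    refine ⟨?_, (minK_eq_iff_minus hminus hk (by omega)).mpr ?_⟩
    · rw [sepBad_ssum_iff]; tauto
    · intro j hj1 hjk hM
      exact h2 j hj1 hjk ((minusAt_ssum_iff σ τ (by omega)).mp hM)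

lemma fiberP_equiv (k m : ℕ) (hk : 1 ≤ k) (hm : 1 ≤ m) :
    Nat.card {π : Equiv.Perm (Fin (k+m)) // ¬ SepBad π ∧ minK π = k ∧ PlusAt π k}
      = uP k * sepCount m := by
  have e1 : {π : Equiv.Perm (Fin (k+m)) // ¬ SepBad π ∧ minK π = k ∧ PlusAt π k}
      ≃ {p : {π : Equiv.Perm (Fin (k+m)) // PlusAt π k} //
          ¬ SepBad p.1 ∧ minK p.1 = k} :=
    { toFun := fun x => ⟨⟨x.1, x.2.2.2⟩, x.2.1, x.2.2.1⟩
      invFun := fun p => ⟨p.1.1, p.2.1, p.2.2, p.1.2⟩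
      left_inv := fun _ => rfl
      right_inv := fun _ => rfl }
  have key : ∀ p : {π : Equiv.Perm (Fin (k+m)) // PlusAt π k},
      (¬ SepBad p.1 ∧ minK p.1 = k) ↔
      ((¬ SepBad (dEquiv p).1 ∧ ∀ j, 1 ≤ j → j < k → ¬ PlusAt (dEquiv p).1 j) ∧
        ¬ SepBad (dEquiv p).2) := by
    rintro ⟨π, hp⟩
    have hπ : dsum (dFst π hp) (dSnd π hp) = π := dsum_dFst_dSnd π hp
    have base := fiberP_iff (dFst π hp) (dSnd π hp) hk hm
    rw [hπ] at base
    exact base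
  have e2 := e1.trans ((dEquiv.subtypeEquiv key).trans
    (Equiv.subtypeProdEquivProd
      (p := fun σ => ¬ SepBad σ ∧ ∀ j, 1 ≤ j → j < k → ¬ PlusAt σ j)
      (q := fun τ => ¬ SepBad τ)))
  rw [Nat.card_congr e2, Nat.card_prod]
  rfl

lemma fiberM_equiv (k m : ℕ) (hk : 1 ≤ k) (hm : 1 ≤ m) :
    Nat.card {π : Equiv.Perm (Fin (k+m)) // ¬ SepBad π ∧ minK π = k ∧ MinusAt π k}
      = uM k * sepCount m := by
  have e1 : {π : Equiv.Perm (Fin (k+m)) // ¬ SepBad π ∧ minK π = k ∧ MinusAt π k}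
      ≃ {p : {π : Equiv.Perm (Fin (k+m)) // MinusAt π k} //
          ¬ SepBad p.1 ∧ minK p.1 = k} :=
    { toFun := fun x => ⟨⟨x.1, x.2.2.2⟩, x.2.1, x.2.2.1⟩
      invFun := fun p => ⟨p.1.1, p.2.1, p.2.2, p.1.2⟩
      left_inv := fun _ => rfl
      right_inv := fun _ => rfl }
  have key : ∀ p : {π : Equiv.Perm (Fin (k+m)) // MinusAt π k},
      (¬ SepBad p.1 ∧ minK p.1 = k) ↔
      ((¬ SepBad (sEquiv p).1 ∧ ∀ j, 1 ≤ j → j < k → ¬ MinusAt (sEquiv p).1 j) ∧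
        ¬ SepBad (sEquiv p).2) := by
    rintro ⟨π, hp⟩
    have hπ : ssum (sFst π hp) (sSnd π hp) = π := ssum_sFst_sSnd π hp
    have base := fiberM_iff (sFst π hp) (sSnd π hp) hk hm
    rw [hπ] at base
    exact base
  have e2 := e1.trans ((sEquiv.subtypeEquiv key).trans
    (Equiv.subtypeProdEquivProd
      (p := fun σ => ¬ SepBad σ ∧ ∀ j, 1 ≤ j → j < k → ¬ MinusAt σ j)
      (q := fun τ => ¬ SepBad τ)))
  rw [Nat.card_congr e2, Nat.card_prod]
  rfl

lemma fiberP_cardN (n k : ℕ) (hk : 1 ≤ k) (hkn : k < n) :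
    Nat.card {π : Equiv.Perm (Fin n) // ¬ SepBad π ∧ minK π = k ∧ PlusAt π k}
      = uP k * sepCount (n - k) := by
  obtain ⟨m, rfl⟩ : ∃ m, n = k + m := ⟨n - k, by omega⟩
  rw [show k + m - k = m from by omega]
  exact fiberP_equiv k m hk (by omega)

lemma fiberM_cardN (n k : ℕ) (hk : 1 ≤ k) (hkn : k < n) :
    Nat.card {π : Equiv.Perm (Fin n) // ¬ SepBad π ∧ minK π = k ∧ MinusAt π k}
      = uM k * sepCount (n - k) := by
  obtain ⟨m, rfl⟩ : ∃ m, n = k + m := ⟨n - k, by omega⟩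
  rw [show k + m - k = m from by omega]
  exact fiberM_equiv k m hk (by omega)
end Counting

section Small
open Finset

lemma sepBad_one (π : Equiv.Perm (Fin 1)) : ¬ SepBad π := by
  rintro ⟨i1, i2, _, _, h12, _⟩
  have l1 := i1.isLt
  have l2 := i2.isLt
  rw [Fin.lt_def] at h12
  omega

lemma sepCount_one : sepCount 1 = 1 := by
  rw [sepCount, Nat.card_congr (Equiv.subtypeUnivEquiv sepBad_one),
    Nat.card_eq_fintype_card]
  simp

lemma uP_one : uP 1 = 1 := by
  rw [uP, Nat.card_congr (Equiv.subtypeUnivEquiv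
    (fun σ => ⟨sepBad_one σ, fun j h1 h2 => absurd h2 (by omega)⟩)),
    Nat.card_eq_fintype_card]
  simp

lemma uM_one : uM 1 = 1 := by
  rw [uM, Nat.card_congr (Equiv.subtypeUnivEquiv
    (fun σ => ⟨sepBad_one σ, fun j h1 h2 => absurd h2 (by omega)⟩)),
    Nat.card_eq_fintype_card]
  simp

open scoped Classical in
noncomputable def splitEquiv {k : ℕ} (hk : 2 ≤ k) :
    {σ : Equiv.Perm (Fin k) // ¬ SepBad σ} ≃
      {σ : Equiv.Perm (Fin k) // ¬ SepBad σ ∧ ∀ j, 1 ≤ j → j < k → ¬ PlusAt σ j} ⊕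
      {σ : Equiv.Perm (Fin k) // ¬ SepBad σ ∧ ∀ j, 1 ≤ j → j < k → ¬ MinusAt σ j} where
  toFun x :=
    if h : ∀ j, 1 ≤ j → j < k → ¬ PlusAt x.1 j then Sum.inl ⟨x.1, x.2, h⟩
    else Sum.inr ⟨x.1, x.2, by
      push_neg at h
      obtain ⟨j0, hj01, hj0k, hP0⟩ := h
      exact fun j h1 h2 hM => not_plus_and_minus hj01 hj0k h1 h2 hP0 hM⟩
  invFun y := Sum.elim (fun p => ⟨p.1, p.2.1⟩) (fun p => ⟨p.1, p.2.1⟩) y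
  left_inv x := by
    by_cases h : ∀ j, 1 ≤ j → j < k → ¬ PlusAt x.1 j
    · dsimp only
      rw [dif_pos h]
      rfl
    · dsimp only
      rw [dif_neg h]
      rfl
  right_inv y := by
    rcases y with p | p
    · have h : ∀ j, 1 ≤ j → j < k → ¬ PlusAt p.1 j := p.2.2
      simp only [Sum.elim_inl]
      exact dif_pos h
    · have h : ¬ ∀ j, 1 ≤ j → j < k → ¬ PlusAt p.1 j := by
        intro h
        obtain ⟨j, hj1, hjk, hj⟩ := sep_dichotomy hk p.2.1
        rcases hj with hj | hj
        · exact h j hj1 hjk hj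
        · exact p.2.2 j hj1 hjk hj
      simp only [Sum.elim_inr]
      exact dif_neg h

lemma uP_add_uM {k : ℕ} (hk : 2 ≤ k) : uP k + uM k = sepCount k := by
  rw [uP, uM, sepCount, Nat.card_congr (splitEquiv hk), Nat.card_sum]

lemma sep_recurrence {n : ℕ} (hn : 2 ≤ n) :
    sepCount n = sepCount (n-1) + ∑ k ∈ Ioo 0 n, sepCount k * sepCount (n - k) := by
  classical
  have hmap : ∀ π ∈ univ.filter (fun π : Equiv.Perm (Fin n) => ¬ SepBad π),
      minK π ∈ Ioo 0 n := by
    intro π hπ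
    rw [mem_filter] at hπ
    have := minK_spec hn hπ.2
    rw [mem_Ioo]
    omega
  rw [sepCount, nat_card_subtype, Finset.card_eq_sum_card_fiberwise hmap]
  have step : ∀ k ∈ Ioo 0 n,
      (filter (fun π => minK π = k)
        (univ.filter fun π : Equiv.Perm (Fin n) => ¬ SepBad π)).card
        = (uP k + uM k) * sepCount (n - k) := by
    intro k hk
    rw [mem_Ioo] at hk
    rw [← Finset.card_filter_add_card_filter_not (p := fun π => PlusAt π k)]
    have e1 : filter (fun π => PlusAt π k) (filter (fun π => minK π = k)
        (univ.filter fun π : Equiv.Perm (Fin n) => ¬ SepBad π))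
        = univ.filter (fun π : Equiv.Perm (Fin n) =>
            ¬ SepBad π ∧ minK π = k ∧ PlusAt π k) := by
      ext π
      simp only [mem_filter, mem_univ, true_and]
      tauto
    have e2 : filter (fun π => ¬ PlusAt π k) (filter (fun π => minK π = k)
        (univ.filter fun π : Equiv.Perm (Fin n) => ¬ SepBad π))
        = univ.filter (fun π : Equiv.Perm (Fin n) =>
            ¬ SepBad π ∧ minK π = k ∧ MinusAt π k) := by
      ext π
      simp only [mem_filter, mem_univ, true_and]
      constructor
      · rintro ⟨⟨hb, hm⟩, hnp⟩
        have hs := minK_spec hn hb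
        rw [hm] at hs
        rcases hs.2.2 with h | h
        · exact absurd h hnp
        · exact ⟨hb, hm, h⟩
      · rintro ⟨hb, hm, hM⟩
        exact ⟨⟨hb, hm⟩, fun hP => not_plus_and_minus hk.1 hk.2 hk.1 hk.2 hP hM⟩
    rw [e1, e2, ← nat_card_subtype, ← nat_card_subtype,
      fiberP_cardN n k hk.1 hk.2, fiberM_cardN n k hk.1 hk.2, Nat.add_mul]
  rw [Finset.sum_congr rfl step]
  have final : ∀ k ∈ Ioo 0 n, (uP k + uM k) * sepCount (n - k)
      = sepCount k * sepCount (n - k) + (if k = 1 then sepCount (n - 1) else 0) := by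
    intro k hk
    rw [mem_Ioo] at hk
    by_cases h1 : k = 1
    · subst h1
      rw [uP_one, uM_one, sepCount_one, if_pos rfl]
      omega
    · rw [uP_add_uM (by omega), if_neg h1, add_zero]
  rw [Finset.sum_congr rfl final, Finset.sum_add_distrib]
  rw [Finset.sum_ite_eq' (Ioo 0 n) 1 (fun _ => sepCount (n - 1))]
  rw [if_pos (by rw [mem_Ioo]; omega)]
  omega
end Small

/-- The generating series of the numbers of separable permutations (the large
Schroeder numbers) satisfies `A(t)² − (1 − t)·A(t) + t = 0` in `ℤ⟦t⟧`. -/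
theorem separable_generating_series_identity (a : ℕ → ℤ) (h0 : a 0 = 0)
    (ha : ∀ n : ℕ, 1 ≤ n → a n =
      (Nat.card {π : Equiv.Perm (Fin n) //
        ¬ ∃ i₁ i₂ i₃ i₄ : Fin n, i₁ < i₂ ∧ i₂ < i₃ ∧ i₃ < i₄ ∧
          ((π i₂ < π i₄ ∧ π i₄ < π i₁ ∧ π i₁ < π i₃) ∨
           (π i₃ < π i₁ ∧ π i₁ < π i₄ ∧ π i₄ < π i₂))} : ℤ)) :
    (PowerSeries.mk a) ^ 2 - (1 - PowerSeries.X) * PowerSeries.mk a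
      + PowerSeries.X = 0 := by
  have hav : ∀ n : ℕ, 1 ≤ n → a n = (sepCount n : ℤ) := by
    intro n hn
    rw [ha n hn]
    rfl
  apply PowerSeries.ext
  intro n
  have hsub : (1 - PowerSeries.X) * PowerSeries.mk a
      = PowerSeries.mk a - PowerSeries.X * PowerSeries.mk a := by ring
  rw [hsub, map_zero, map_add, map_sub, map_sub, pow_two, PowerSeries.coeff_mul,
    PowerSeries.coeff_mk, PowerSeries.coeff_X]
  simp only [PowerSeries.coeff_mk]
  rcases n with _ | n
  · simp [h0]
  · rw [PowerSeries.coeff_succ_X_mul, PowerSeries.coeff_mk,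
      Finset.Nat.sum_antidiagonal_eq_sum_range_succ_mk]
    rcases Nat.eq_zero_or_pos n with rfl | hn1
    · have h1 : a 1 = 1 := by rw [hav 1 le_rfl, sepCount_one]; norm_num
      simp [Finset.sum_range_succ, h0, h1]
    · have hN : 2 ≤ n + 1 := by omega
      have hdrop : ∑ k ∈ Finset.range (n+2), a k * a (n+1-k)
          = ∑ k ∈ Finset.Ioo 0 (n+1), a k * a (n+1-k) := by
        rw [eq_comm]
        apply Finset.sum_subset
        · intro x hx
          rw [Finset.mem_Ioo] at hx
          rw [Finset.mem_range]
          omega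
        · intro x hx hnx
          rw [Finset.mem_range] at hx
          rw [Finset.mem_Ioo] at hnx
          have hx0 : x = 0 ∨ x = n + 1 := by omega
          rcases hx0 with rfl | rfl
          · rw [h0, zero_mul]
          · rw [show n + 1 - (n+1) = 0 from by omega, h0, mul_zero]
      rw [hdrop]
      have hsum : ∑ k ∈ Finset.Ioo 0 (n+1), a k * a (n+1-k)
          = ((∑ k ∈ Finset.Ioo 0 (n+1), sepCount k * sepCount (n+1-k) : ℕ) : ℤ) := by
        push_cast
        apply Finset.sum_congr rfl
        intro k hk
        rw [Finset.mem_Ioo] at hk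
        rw [hav k (by omega), hav (n+1-k) (by omega)]
      rw [hsum]
      have hrec := sep_recurrence hN
      rw [show n + 1 - 1 = n from rfl] at hrec
      have e1 : a (n+1) = (sepCount (n+1) : ℤ) := hav _ (by omega)
      have e2 : a n = (sepCount n : ℤ) := hav _ (by omega)
      rw [e1, e2, if_neg (by omega)]
      have hrecZ : (sepCount (n+1) : ℤ)
          = (sepCount n : ℤ) + ((∑ k ∈ Finset.Ioo 0 (n+1),
              sepCount k * sepCount (n+1-k) : ℕ) : ℤ) := by
        exact_mod_cast congrArg (fun x : ℕ => (x : ℤ)) hrec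
      linarith [hrecZ]
end

section
/- (Formal Weierstrass preparation) Let K be an algebraically closed field of characteristic zero and let F ∈ K[[x, y]] be a formal power series not divisible by x. Then there exist a unit A ∈ K[[x, y]] (i.e. the constant coefficient A(0,0) is nonzero), a natural number m, and formal power series a₀, …, a_{m−1} ∈ K[[x]], each with zero constant coefficient, such that F = A · (yᵐ + a_{m−1}(x)·y^{m−1} + ⋯ + a₁(x)·y + a₀(x)). -/
namespace WPprep
open PowerSeries

variable {K : Type*} [Field K]

/-- truncation below degree m -/
noncomputable def truncLT (m : ℕ) (w : PowerSeries K) : PowerSeries K :=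
  PowerSeries.mk fun j => if j < m then PowerSeries.coeff j w else 0

/-- shift down by m -/
noncomputable def shiftm (m : ℕ) (w : PowerSeries K) : PowerSeries K :=
  PowerSeries.mk fun j => PowerSeries.coeff (m + j) w

lemma split_eq (m : ℕ) (w : PowerSeries K) :
    PowerSeries.X ^ m * shiftm m w + truncLT m w = w := by
  ext j
  rw [map_add, PowerSeries.coeff_X_pow_mul']
  simp only [truncLT, shiftm, coeff_mk]
  by_cases h : m ≤ j
  · rw [if_pos h, if_neg (by omega), add_zero]
    have hj : m + (j - m) = j := by omega
    rw [hj]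
  · rw [if_neg h, if_pos (by omega), zero_add]


lemma coeff_truncLT (m : ℕ) (w : PowerSeries K) (j : ℕ) :
    PowerSeries.coeff j (truncLT m w) = if j < m then PowerSeries.coeff j w else 0 :=
  coeff_mk _ _

/-- The simultaneous recursion producing the rows (in powers of x) of the unit `A`
(first component) and of the lower part of the distinguished polynomial (second
component). -/
noncomputable def row (m : ℕ) (u v : PowerSeries K) (g : ℕ → PowerSeries K) :
    ℕ → PowerSeries K × PowerSeries K := fun i =>
  let k := g i - ∑ j ∈ (Finset.range (i - 1)).attach,
      (row m u v g (j.1 + 1)).1 * (row m u v g (i - 1 - j.1)).2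
  (u * shiftm m (v * k), truncLT m (v * k))
termination_by i => i
decreasing_by
  · have := j.2; rw [Finset.mem_range] at this; omega
  · have := j.2; rw [Finset.mem_range] at this; omega

/-- the "known part" at level `i` -/
noncomputable def kfun (m : ℕ) (u v : PowerSeries K) (g : ℕ → PowerSeries K) (i : ℕ) :
    PowerSeries K :=
  g i - ∑ j ∈ Finset.range (i - 1),
      (row m u v g (j + 1)).1 * (row m u v g (i - 1 - j)).2

lemma row_def (m : ℕ) (u v : PowerSeries K) (g : ℕ → PowerSeries K) (i : ℕ) :
    row m u v g i = (u * shiftm m (v * kfun m u v g i),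
      truncLT m (v * kfun m u v g i)) := by
  rw [row]
  have h : ∑ j ∈ (Finset.range (i - 1)).attach,
      (row m u v g (j.1 + 1)).1 * (row m u v g (i - 1 - j.1)).2 =
      ∑ j ∈ Finset.range (i - 1),
      (row m u v g (j + 1)).1 * (row m u v g (i - 1 - j)).2 :=
    Finset.sum_attach (Finset.range (i - 1))
      (fun j => (row m u v g (j + 1)).1 * (row m u v g (i - 1 - j)).2)
  rw [h, kfun]

lemma shiftm_X_pow (m : ℕ) : shiftm m (PowerSeries.X ^ m : PowerSeries K) = 1 := by
  ext j
  simp only [shiftm, coeff_mk, PowerSeries.coeff_X_pow, PowerSeries.coeff_one]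
  by_cases h : j = 0 <;> simp [h] <;> omega

lemma truncLT_X_pow (m : ℕ) : truncLT m (PowerSeries.X ^ m : PowerSeries K) = 0 := by
  ext j
  simp only [truncLT, coeff_mk, PowerSeries.coeff_X_pow, map_zero]
  split_ifs with h1 h2 <;> first | rfl | omega

lemma row_zero (m : ℕ) (u v : PowerSeries K) (g : ℕ → PowerSeries K)
    (hg0 : g 0 = u * PowerSeries.X ^ m) (hvu : v * u = 1) :
    row m u v g 0 = (u, 0) := by
  rw [row_def]
  have hk : kfun m u v g 0 = u * PowerSeries.X ^ m := by
    simp [kfun, hg0]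
  have : v * kfun m u v g 0 = PowerSeries.X ^ m := by
    rw [hk, ← mul_assoc, hvu, one_mul]
  rw [this, shiftm_X_pow, truncLT_X_pow, mul_one]

/-- row of the distinguished polynomial -/
noncomputable def Prow (m : ℕ) (u v : PowerSeries K) (g : ℕ → PowerSeries K) (i : ℕ) :
    PowerSeries K :=
  (if i = 0 then PowerSeries.X ^ m else 0) + (row m u v g i).2

lemma rowEq (m : ℕ) (u v : PowerSeries K) (g : ℕ → PowerSeries K)
    (hg0 : g 0 = u * PowerSeries.X ^ m) (hvu : v * u = 1) (i : ℕ) :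
    ∑ k ∈ Finset.range (i + 1),
      (row m u v g k).1 * Prow m u v g (i - k) = g i := by
  rcases Nat.eq_zero_or_pos i with hi | hi
  · subst hi
    rw [Finset.sum_range_one, row_zero m u v g hg0 hvu]
    simp [Prow, row_zero m u v g hg0 hvu, hg0]
  · -- i ≥ 1
    obtain ⟨n, rfl⟩ : ∃ n, i = n + 1 := ⟨i - 1, by omega⟩
    rw [Finset.sum_range_succ']  -- peel k = 0
    rw [Finset.sum_range_succ]   -- peel top of inner range (n+1): k+1 = n+1
    have h1 : ∀ k ∈ Finset.range n,
        (row m u v g (k + 1)).1 * Prow m u v g (n + 1 - (k + 1)) =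
        (row m u v g (k + 1)).1 * (row m u v g (n - k)).2 := by
      intro k hk
      rw [Finset.mem_range] at hk
      have : n + 1 - (k + 1) = n - k := by omega
      rw [this, Prow, if_neg (by omega), zero_add]
    rw [Finset.sum_congr rfl h1]
    have hmid : ∑ k ∈ Finset.range n,
        (row m u v g (k + 1)).1 * (row m u v g (n - k)).2 =
        g (n + 1) - kfun m u v g (n + 1) := by
      rw [kfun]
      have h2 : n + 1 - 1 = n := by omega
      rw [h2, sub_sub_cancel]
    rw [hmid]
    have hf0 : (row m u v g 0).1 * Prow m u v g (n + 1 - 0) =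
        u * (row m u v g (n + 1)).2 := by
      rw [row_zero m u v g hg0 hvu, Prow, if_neg (by omega), zero_add, Nat.sub_zero]
    have hftop : (row m u v g (n + 1)).1 * Prow m u v g (n + 1 - (n + 1)) =
        (row m u v g (n + 1)).1 * PowerSeries.X ^ m := by
      have : n + 1 - (n + 1) = 0 := by omega
      rw [this, Prow, if_pos rfl, row_zero m u v g hg0 hvu, add_zero]
    rw [hf0, hftop]
    have key : (row m u v g (n + 1)).1 * PowerSeries.X ^ m +
        u * (row m u v g (n + 1)).2 = kfun m u v g (n + 1) := by
      rw [row_def]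
      dsimp only
      calc u * shiftm m (v * kfun m u v g (n + 1)) * PowerSeries.X ^ m +
            u * truncLT m (v * kfun m u v g (n + 1))
          = u * (PowerSeries.X ^ m * shiftm m (v * kfun m u v g (n + 1)) +
              truncLT m (v * kfun m u v g (n + 1))) := by ring
        _ = u * (v * kfun m u v g (n + 1)) := by rw [split_eq]
        _ = (v * u) * kfun m u v g (n + 1) := by ring
        _ = kfun m u v g (n + 1) := by rw [hvu, one_mul]
    -- assemble
    rw [add_assoc, key]
    ring


lemma rowEq' (m : ℕ) (u v : PowerSeries K) (g : ℕ → PowerSeries K)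
    (hg0 : g 0 = u * PowerSeries.X ^ m) (hvu : v * u = 1) (i : ℕ) :
    ∑ p ∈ Finset.HasAntidiagonal.antidiagonal i,
      (row m u v g p.1).1 * Prow m u v g p.2 = g i := by
  rw [Finset.Nat.sum_antidiagonal_eq_sum_range_succ
    (fun a b => (row m u v g a).1 * Prow m u v g b) i]
  exact rowEq m u v g hg0 hvu i

lemma rho_coeff_ge (m : ℕ) (u v : PowerSeries K) (g : ℕ → PowerSeries K) (i j : ℕ)
    (hj : m ≤ j) : PowerSeries.coeff j ((row m u v g i).2) = 0 := by
  rw [row_def]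
  dsimp only
  rw [coeff_truncLT, if_neg (by omega)]

/-! ### Two variables -/

/-- The exponent finsupp `(i, j)`. -/
noncomputable def emb (i j : ℕ) : Fin 2 →₀ ℕ :=
  Finsupp.single 0 i + Finsupp.single 1 j

@[simp] lemma emb_apply_zero (i j : ℕ) : emb i j 0 = i := by
  simp [emb, Finsupp.single_apply]

@[simp] lemma emb_apply_one (i j : ℕ) : emb i j 1 = j := by
  simp [emb, Finsupp.single_apply]

lemma emb_self (d : Fin 2 →₀ ℕ) : emb (d 0) (d 1) = d := by
  ext a
  fin_cases a
  · exact emb_apply_zero _ _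
  · exact emb_apply_one _ _

lemma emb_inj {i j i' j' : ℕ} (h : emb i j = emb i' j') : i = i' ∧ j = j' := by
  constructor
  · have := congrArg (fun e : Fin 2 →₀ ℕ => e 0) h; simpa using this
  · have := congrArg (fun e : Fin 2 →₀ ℕ => e 1) h; simpa using this

lemma emb_eq_single1 (i j n : ℕ) :
    emb i j = Finsupp.single 1 n ↔ i = 0 ∧ j = n := by
  have h : (Finsupp.single 1 n : Fin 2 →₀ ℕ) = emb 0 n := by
    simp [emb]
  rw [h]
  constructor
  · exact emb_inj
  · rintro ⟨rfl, rfl⟩; rfl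

lemma coeff_mul₂ (f g : MvPowerSeries (Fin 2) K) (d : Fin 2 →₀ ℕ) :
    MvPowerSeries.coeff d (f * g) =
      ∑ p ∈ Finset.HasAntidiagonal.antidiagonal (d 0), ∑ q ∈ Finset.HasAntidiagonal.antidiagonal (d 1),
        MvPowerSeries.coeff (emb p.1 q.1) f * MvPowerSeries.coeff (emb p.2 q.2) g := by
  rw [MvPowerSeries.coeff_mul, ← Finset.sum_product']
  refine (Finset.sum_nbij' (fun uv => ((uv.1 0, uv.2 0), (uv.1 1, uv.2 1)))
    (fun pq => (emb pq.1.1 pq.2.1, emb pq.1.2 pq.2.2)) ?_ ?_ ?_ ?_ ?_).symm.symm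
  · -- membership forward
    rintro ⟨x, y⟩ hxy
    rw [Finset.HasAntidiagonal.mem_antidiagonal] at hxy
    simp only [Finset.mem_product, Finset.HasAntidiagonal.mem_antidiagonal]
    constructor
    · have := congrArg (fun e : Fin 2 →₀ ℕ => e 0) hxy; simpa using this
    · have := congrArg (fun e : Fin 2 →₀ ℕ => e 1) hxy; simpa using this
  · -- membership backward
    rintro ⟨⟨p1, p2⟩, ⟨q1, q2⟩⟩ hpq
    simp only [Finset.mem_product, Finset.HasAntidiagonal.mem_antidiagonal] at hpq
    rw [Finset.HasAntidiagonal.mem_antidiagonal]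
    have : emb p1 q1 + emb p2 q2 = emb (p1 + p2) (q1 + q2) := by
      ext a; fin_cases a <;> simp
    rw [this, hpq.1, hpq.2, emb_self]
  · -- left inverse
    rintro ⟨x, y⟩ hxy
    simp only [Prod.mk.injEq]
    exact ⟨emb_self x, emb_self y⟩
  · -- right inverse
    rintro ⟨⟨p1, p2⟩, ⟨q1, q2⟩⟩ hpq
    simp
  · -- values
    rintro ⟨x, y⟩ hxy
    rw [emb_self, emb_self]

variable (m : ℕ) (u v : PowerSeries K) (g : ℕ → PowerSeries K)

/-- The unit `A` as a two-variable series. -/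
noncomputable def Amv : MvPowerSeries (Fin 2) K :=
  fun d => PowerSeries.coeff (d 1) ((row m u v g (d 0)).1)

/-- The coefficient series `a_t(x)` as a two-variable series. -/
noncomputable def amv (t : ℕ) : MvPowerSeries (Fin 2) K :=
  fun d => if d 1 = 0 then PowerSeries.coeff t ((row m u v g (d 0)).2) else 0

lemma coeff_Amv (d : Fin 2 →₀ ℕ) :
    MvPowerSeries.coeff d (Amv m u v g) =
      PowerSeries.coeff (d 1) ((row m u v g (d 0)).1) := rfl

lemma coeff_amv (t : ℕ) (d : Fin 2 →₀ ℕ) :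
    MvPowerSeries.coeff d (amv m u v g t) =
      if d 1 = 0 then PowerSeries.coeff t ((row m u v g (d 0)).2) else 0 := rfl

lemma sum_antid_left (N : ℕ) (f : ℕ → K) :
    (∑ p ∈ Finset.HasAntidiagonal.antidiagonal N, if p.1 = 0 then f p.2 else 0) = f N := by
  rw [Finset.Nat.sum_antidiagonal_eq_sum_range_succ (fun a b => if a = 0 then f b else 0) N]
  rw [Finset.sum_ite_eq' (Finset.range (N + 1)) 0 (fun k => f (N - k))]
  rw [if_pos (Finset.mem_range.2 (by omega)), Nat.sub_zero]

lemma sum_antid_right (N : ℕ) (f : ℕ → K) :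
    (∑ p ∈ Finset.HasAntidiagonal.antidiagonal N, if p.2 = 0 then f p.1 else 0) = f N := by
  rw [Finset.Nat.sum_antidiagonal_eq_sum_range_succ (fun a b => if b = 0 then f a else 0) N]
  rw [Finset.sum_eq_single N]
  · rw [if_pos (by omega)]
  · intro k hk hkN
    rw [Finset.mem_range] at hk
    rw [if_neg (by omega)]
  · intro h
    exact absurd (Finset.mem_range.2 (by omega)) h

lemma coeff_amv_mul_X_pow (t n : ℕ) (e : Fin 2 →₀ ℕ) :
    MvPowerSeries.coeff e (amv m u v g t * MvPowerSeries.X 1 ^ n) =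
      if e 1 = n then PowerSeries.coeff t ((row m u v g (e 0)).2) else 0 := by
  rw [coeff_mul₂]
  have hterm : ∀ p ∈ Finset.HasAntidiagonal.antidiagonal (e 0), ∀ q ∈ Finset.HasAntidiagonal.antidiagonal (e 1),
      MvPowerSeries.coeff (emb p.1 q.1) (amv m u v g t) *
        MvPowerSeries.coeff (emb p.2 q.2) (MvPowerSeries.X 1 ^ n) =
      if p.2 = 0 ∧ q.1 = 0 ∧ q.2 = n
        then PowerSeries.coeff t ((row m u v g p.1).2) else 0 := by
    intro p _ q _
    simp only [coeff_amv, MvPowerSeries.coeff_X_pow, emb_eq_single1,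
      emb_apply_zero, emb_apply_one, mul_ite, mul_one, mul_zero, ite_mul, zero_mul]
    split_ifs <;> first | rfl | tauto
  rw [Finset.sum_congr rfl (fun p hp => Finset.sum_congr rfl (hterm p hp))]
  have hinner : ∀ p ∈ Finset.HasAntidiagonal.antidiagonal (e 0),
      (∑ q ∈ Finset.HasAntidiagonal.antidiagonal (e 1),
        if p.2 = 0 ∧ q.1 = 0 ∧ q.2 = n
          then PowerSeries.coeff t ((row m u v g p.1).2) else 0) =
      if p.2 = 0 then (if e 1 = n
          then PowerSeries.coeff t ((row m u v g p.1).2) else 0) else 0 := by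
    intro p _
    have : ∀ q ∈ Finset.HasAntidiagonal.antidiagonal (e 1),
        (if p.2 = 0 ∧ q.1 = 0 ∧ q.2 = n
          then PowerSeries.coeff t ((row m u v g p.1).2) else 0) =
        if q.1 = 0 then (if q.2 = n then (if p.2 = 0
          then PowerSeries.coeff t ((row m u v g p.1).2) else 0) else 0) else 0 := by
      intro q _
      split_ifs <;> first | rfl | tauto
    rw [Finset.sum_congr rfl this,
      sum_antid_left (e 1) (fun b => if b = n then (if p.2 = 0
        then PowerSeries.coeff t ((row m u v g p.1).2) else 0) else 0)]
    split_ifs <;> rfl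
  rw [Finset.sum_congr rfl hinner,
    sum_antid_right (e 0) (fun a => if e 1 = n
      then PowerSeries.coeff t ((row m u v g a).2) else 0)]


lemma eq_single1_iff (e : Fin 2 →₀ ℕ) (n : ℕ) :
    e = Finsupp.single 1 n ↔ e 0 = 0 ∧ e 1 = n := by
  conv_lhs => rw [← emb_self e]
  exact emb_eq_single1 _ _ _

lemma coeffP (e : Fin 2 →₀ ℕ) :
    MvPowerSeries.coeff e ((MvPowerSeries.X 1 : MvPowerSeries (Fin 2) K) ^ m +
      ∑ t : Fin m, amv m u v g (t : ℕ) *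
        (MvPowerSeries.X 1 : MvPowerSeries (Fin 2) K) ^ (t : ℕ)) =
    PowerSeries.coeff (e 1) (Prow m u v g (e 0)) := by
  rw [map_add, map_sum, MvPowerSeries.coeff_X_pow]
  have hs : ∀ t : Fin m,
      MvPowerSeries.coeff e (amv m u v g (t : ℕ) *
        (MvPowerSeries.X 1 : MvPowerSeries (Fin 2) K) ^ (t : ℕ)) =
      if e 1 = (t : ℕ) then PowerSeries.coeff (e 1) ((row m u v g (e 0)).2) else 0 := by
    intro t
    rw [coeff_amv_mul_X_pow]
    split_ifs with h
    · rw [h]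
    · rfl
  rw [Finset.sum_congr rfl (fun t _ => hs t)]
  rw [Fin.sum_univ_eq_sum_range (fun j => if e 1 = j
    then PowerSeries.coeff (e 1) ((row m u v g (e 0)).2) else 0) m]
  rw [Finset.sum_ite_eq (Finset.range m) (e 1)
    (fun _ => PowerSeries.coeff (e 1) ((row m u v g (e 0)).2))]
  rw [Prow, map_add]
  rw [apply_ite (PowerSeries.coeff (e 1)),
    show (PowerSeries.coeff (e 1)) (0 : PowerSeries K) = 0 from map_zero _,
    PowerSeries.coeff_X_pow]
  simp only [eq_single1_iff, Finset.mem_range]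
  by_cases hlt : e 1 < m
  · rw [if_pos hlt]
    congr 1
    split_ifs <;> first | rfl | omega
  · rw [if_neg hlt, rho_coeff_ge m u v g (e 0) (e 1) (by omega), add_zero, add_zero]
    split_ifs <;> first | rfl | omega

end WPprep




/-- Formal Weierstrass preparation: a formal power series `F ∈ K[[x,y]]` not divisible
by `x` is the product of a unit `A` and a distinguished polynomial
`yᵐ + a_{m-1}(x) y^{m-1} + ⋯ + a₀(x)`, where each `aᵢ` is a series in `x` alone with
zero constant coefficient. -/
theorem formal_weierstrass_preparation (K : Type*) [Field K] [IsAlgClosed K] [CharZero K]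
    (F : MvPowerSeries (Fin 2) K)
    (hF : ¬ (MvPowerSeries.X 0 : MvPowerSeries (Fin 2) K) ∣ F) :
    ∃ (A : MvPowerSeries (Fin 2) K) (m : ℕ) (a : Fin m → MvPowerSeries (Fin 2) K),
      MvPowerSeries.constantCoeff A ≠ 0 ∧
      (∀ i, MvPowerSeries.constantCoeff (a i) = 0) ∧
      (∀ i (d : Fin 2 →₀ ℕ), d 1 ≠ 0 → MvPowerSeries.coeff d (a i) = 0) ∧
      F = A * ((MvPowerSeries.X 1 : MvPowerSeries (Fin 2) K) ^ m +
        ∑ i : Fin m, a i * (MvPowerSeries.X 1 : MvPowerSeries (Fin 2) K) ^ (i : ℕ)) := by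
  classical
  set c : ℕ → ℕ → K := fun i j => MvPowerSeries.coeff (WPprep.emb i j) F with hc
  -- x ∤ F gives a nonzero coefficient on the y-axis
  have hex : ∃ j, c 0 j ≠ 0 := by
    rw [MvPowerSeries.X_dvd_iff] at hF
    push_neg at hF
    obtain ⟨d, hd0, hd⟩ := hF
    refine ⟨d 1, ?_⟩
    have h2 : WPprep.emb 0 (d 1) = d := by rw [← hd0, WPprep.emb_self]
    show MvPowerSeries.coeff (WPprep.emb 0 (d 1)) F ≠ 0
    rwa [h2]
  set m : ℕ := Nat.find hex with hm
  have hcm : c 0 m ≠ 0 := Nat.find_spec hex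
  have hmin : ∀ j < m, c 0 j = 0 := by
    intro j hj
    by_contra h
    have hle : m ≤ j := hm ▸ Nat.find_le h
    omega
  set u : PowerSeries K := PowerSeries.mk fun j => c 0 (m + j) with hu
  have hu0 : PowerSeries.constantCoeff u ≠ 0 := by
    rw [← PowerSeries.coeff_zero_eq_constantCoeff_apply, hu]
    simpa using hcm
  set v : PowerSeries K := u⁻¹ with hv
  have hvu : v * u = 1 := by
    rw [hv, mul_comm]
    exact PowerSeries.mul_inv_cancel u hu0
  set g : ℕ → PowerSeries K := fun i => PowerSeries.mk (c i) with hg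
  have hg0 : g 0 = u * PowerSeries.X ^ m := by
    ext j
    rw [hg, PowerSeries.coeff_mk, PowerSeries.coeff_mul_X_pow']
    by_cases h : m ≤ j
    · rw [if_pos h, hu, PowerSeries.coeff_mk]
      congr 1
      omega
    · rw [if_neg h, hmin j (by omega)]
  refine ⟨WPprep.Amv m u v g, m, fun t => WPprep.amv m u v g (t : ℕ), ?_, ?_, ?_, ?_⟩
  · -- constant coefficient of A
    have h0 : (0 : Fin 2 →₀ ℕ) 0 = 0 := rfl
    have h1 : (0 : Fin 2 →₀ ℕ) 1 = 0 := rfl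
    rw [← MvPowerSeries.coeff_zero_eq_constantCoeff, WPprep.coeff_Amv, h0, h1,
      WPprep.row_zero m u v g hg0 hvu]
    simpa using hu0
  · -- constant coefficients of the aᵢ vanish
    intro t
    rw [← MvPowerSeries.coeff_zero_eq_constantCoeff, WPprep.coeff_amv]
    simp [WPprep.row_zero m u v g hg0 hvu]
  · -- aᵢ depend only on x
    intro t d hd
    rw [WPprep.coeff_amv, if_neg hd]
  · -- the product formula
    ext d
    rw [WPprep.coeff_mul₂]
    have hterm : ∀ p ∈ Finset.HasAntidiagonal.antidiagonal (d 0), ∀ q ∈ Finset.HasAntidiagonal.antidiagonal (d 1),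
        MvPowerSeries.coeff (WPprep.emb p.1 q.1) (WPprep.Amv m u v g) *
          MvPowerSeries.coeff (WPprep.emb p.2 q.2)
            ((MvPowerSeries.X 1 : MvPowerSeries (Fin 2) K) ^ m +
              ∑ t : Fin m, WPprep.amv m u v g (t : ℕ) *
                (MvPowerSeries.X 1 : MvPowerSeries (Fin 2) K) ^ (t : ℕ)) =
        PowerSeries.coeff q.1 ((WPprep.row m u v g p.1).1) *
          PowerSeries.coeff q.2 (WPprep.Prow m u v g p.2) := by
      intro p _ q _
      rw [WPprep.coeff_Amv, WPprep.coeffP, WPprep.emb_apply_zero, WPprep.emb_apply_one,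
        WPprep.emb_apply_zero, WPprep.emb_apply_one]
    rw [Finset.sum_congr rfl (fun p hp => Finset.sum_congr rfl (hterm p hp))]
    have hin : ∀ p ∈ Finset.HasAntidiagonal.antidiagonal (d 0),
        (∑ q ∈ Finset.HasAntidiagonal.antidiagonal (d 1),
          PowerSeries.coeff q.1 ((WPprep.row m u v g p.1).1) *
            PowerSeries.coeff q.2 (WPprep.Prow m u v g p.2)) =
        PowerSeries.coeff (d 1)
          ((WPprep.row m u v g p.1).1 * WPprep.Prow m u v g p.2) := by
      intro p _
      rw [PowerSeries.coeff_mul]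
    rw [Finset.sum_congr rfl hin, ← map_sum,
      WPprep.rowEq' m u v g hg0 hvu (d 0)]
    rw [hg, PowerSeries.coeff_mk, hc]
    conv_lhs => rw [← WPprep.emb_self d]
end

section
/- (Implicit function theorem, Cauchy's calcul des limites) Let 𝕜 be a complete nontrivially normed field of characteristic zero and let F : 𝕜 × 𝕜 → 𝕜 be analytic at (0, 0) with F(0, 0) = 0 and with the derivative at 0 of the function y ↦ F(0, y) nonzero. Then there exist a function f : 𝕜 → 𝕜 analytic at 0 with f(0) = 0, and a neighborhood U of (0, 0) in 𝕜 × 𝕜, such that for every (x, y) ∈ U one has F(x, y) = 0 if and only if y = f(x). -/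
/-!
The map `(x, y) ↦ (x, F (x, y))` is analytic at the origin with invertible derivative, so by the
analytic inverse function theorem its local inverse is analytic; the implicit function is the
second component of that inverse at `(x, 0)`.
-/

open Topology

theorem ContinuousLinearMap.IsInvertible.of_apply_one_ne_zero {𝕜 : Type*}
    [NontriviallyNormedField 𝕜] {L : 𝕜 →L[𝕜] 𝕜} (h : L 1 ≠ 0) : L.IsInvertible :=
  ⟨.unitsEquivAut 𝕜 (.mk0 _ h), by ext; simp⟩

theorem HasFDerivAt.deriv_comp_prodMk_left {𝕜 : Type*} [NontriviallyNormedField 𝕜]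
    {E : Type*} [NormedAddCommGroup E] [NormedSpace 𝕜 E]
    {F : Type*} [NormedAddCommGroup F] [NormedSpace 𝕜 F]
    {f : E × 𝕜 → F} {f' : E × 𝕜 →L[𝕜] F} {a : E} {b : 𝕜}
    (hf : HasFDerivAt f f' (a, b)) :
    deriv (fun y => f (a, y)) b = (f' ∘L .inr 𝕜 E 𝕜) 1 :=
  (hf.comp_hasDerivAt b ((hasDerivAt_const b a).prodMk (hasDerivAt_id b))).deriv

section Complete

variable {𝕜 : Type*} [NontriviallyNormedField 𝕜]
  {E : Type*} [NormedAddCommGroup E] [NormedSpace 𝕜 E] [CompleteSpace E]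
  {F : Type*} [NormedAddCommGroup F] [NormedSpace 𝕜 F] [CompleteSpace F]
  {G : Type*} [NormedAddCommGroup G] [NormedSpace 𝕜 G] [CompleteSpace G]

theorem ImplicitFunctionData.analyticAt_uncurry_implicitFunction
    (φ : ImplicitFunctionData 𝕜 E F G) (hl : AnalyticAt 𝕜 φ.leftFun φ.pt)
    (hr : AnalyticAt 𝕜 φ.rightFun φ.pt) :
    AnalyticAt 𝕜 (Function.uncurry φ.implicitFunction) (φ.prodFun φ.pt) :=
  φ.toOpenPartialHomeomorph.analyticAt_symm' φ.pt_mem_toOpenPartialHomeomorph_source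
    (hl.prod hr) φ.hasStrictFDerivAt.hasFDerivAt.fderiv

theorem HasStrictFDerivAt.analyticAt_implicitFunctionOfProdDomain {u : E × F} {f : E × F → G}
    {f' : E × F →L[𝕜] G} (hf : AnalyticAt 𝕜 f u) (dfu : HasStrictFDerivAt f f' u)
    (if₂u : (f' ∘L .inr 𝕜 E F).IsInvertible) :
    AnalyticAt 𝕜 (dfu.implicitFunctionOfProdDomain if₂u) u.1 := by
  let φ := dfu.implicitFunctionDataOfProdDomain if₂u
  have hφ : AnalyticAt 𝕜 (Function.uncurry φ.implicitFunction) (f u, u.1) :=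
    φ.analyticAt_uncurry_implicitFunction hf analyticAt_fst
  exact analyticAt_snd.comp (hφ.comp (analyticAt_const.prod analyticAt_id))

theorem AnalyticAt.exists_analyticAt_implicitFunction {u : E × F} {f : E × F → G}
    (hf : AnalyticAt 𝕜 f u) (hf₂ : (fderiv 𝕜 f u ∘L .inr 𝕜 E F).IsInvertible) :
    ∃ ψ : E → F, AnalyticAt 𝕜 ψ u.1 ∧ ψ u.1 = u.2 ∧
      ∀ᶠ v in 𝓝 u, f v = f u ↔ v.2 = ψ v.1 := by
  have dfu := hf.hasStrictFDerivAt
  have hψ := dfu.eventually_apply_eq_iff_implicitFunctionOfProdDomain hf₂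
  exact ⟨_, dfu.analyticAt_implicitFunctionOfProdDomain hf hf₂, hψ.self_of_nhds.mp rfl,
    hψ.mono fun _ h => h.trans eq_comm⟩

end Complete

theorem analytic_implicit_function_general (𝕜 : Type*) [NontriviallyNormedField 𝕜]
    [CompleteSpace 𝕜] (F : 𝕜 × 𝕜 → 𝕜)
    (hF : AnalyticAt 𝕜 F (0, 0)) (hF0 : F (0, 0) = 0)
    (hFy : deriv (fun y => F (0, y)) 0 ≠ 0) :
    ∃ f : 𝕜 → 𝕜, AnalyticAt 𝕜 f 0 ∧ f 0 = 0 ∧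
      ∃ U ∈ nhds ((0, 0) : 𝕜 × 𝕜), ∀ p ∈ U, (F p = 0 ↔ p.2 = f p.1) := by
  have hF₂ : (fderiv 𝕜 F (0, 0) ∘L .inr 𝕜 𝕜 𝕜).IsInvertible :=
    .of_apply_one_ne_zero (hF.differentiableAt.hasFDerivAt.deriv_comp_prodMk_left ▸ hFy)
  obtain ⟨f, hf, hf0, hfF⟩ := hF.exists_analyticAt_implicitFunction hF₂
  rw [hF0] at hfF
  exact ⟨f, hf, hf0, _, hfF, fun _ => id⟩

/-- Implicit function theorem (Cauchy's calcul des limites): over a complete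
nontrivially normed field of characteristic zero, an analytic equation
`F(x, y) = 0` with `F(0,0) = 0` and `∂F/∂y(0,0) ≠ 0` is solved, near the origin,
exactly by the graph `y = f(x)` of a function analytic at `0`. -/
theorem analytic_implicit_function (𝕜 : Type*) [NontriviallyNormedField 𝕜]
    [CompleteSpace 𝕜] [CharZero 𝕜] (F : 𝕜 × 𝕜 → 𝕜)
    (hF : AnalyticAt 𝕜 F (0, 0)) (hF0 : F (0, 0) = 0)
    (hFy : deriv (fun y => F (0, y)) 0 ≠ 0) :
    ∃ f : 𝕜 → 𝕜, AnalyticAt 𝕜 f 0 ∧ f 0 = 0 ∧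
      ∃ U ∈ nhds ((0, 0) : 𝕜 × 𝕜), ∀ p ∈ U, (F p = 0 ↔ p.2 = f p.1) :=
  analytic_implicit_function_general 𝕜 F hF hF0 hFy
end

section
/- Let F : ℝ × ℝ → ℝ be real analytic at (0, 0) with F(0, 0) = 0, and suppose that the order of vanishing at 0 of the function y ↦ F(0, y) is finite and odd; that is, writing F(0, y) = Σ_{k≥0} cₖ yᵏ on a neighborhood of 0, the smallest k with cₖ ≠ 0 is an odd integer. Then for every ε > 0 there exists δ > 0 such that for every real x with |x| < δ there exists a real y with |y| < ε and F(x, y) = 0. -/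
/-!
Write `F(0, y) = y ^ k * u(y)` with `u` continuous and `u(0) ≠ 0`. Since `k` is odd,
`F(0, -t)` and `F(0, t)` have opposite signs for small `t > 0`. By continuity of `F` this sign
change persists on the segment `{x} × [-t, t]` for all small `x`, and the intermediate value
theorem gives a zero `y ∈ [-t, t]`.
-/

open Filter Topology Set

section
variable {𝕜 E : Type*} [NontriviallyNormedField 𝕜] [NormedAddCommGroup E] [NormedSpace 𝕜 E]

theorem FormalMultilinearSeries.order_eq_of_coeff {p : FormalMultilinearSeries 𝕜 𝕜 E} {k : ℕ}
    (hk : p.coeff k ≠ 0) (hlow : ∀ j < k, p.coeff j = 0) : p.order = k := by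
  have hpk : p k ≠ 0 := mt coeff_eq_zero.mpr hk
  refine le_antisymm (Nat.sInf_le hpk) (le_of_not_gt fun hlt => ?_)
  exact p.apply_order_ne_zero (fun h => hpk (by simp [h])) (coeff_eq_zero.mp (hlow _ hlt))

theorem HasFPowerSeriesAt.exists_eq_pow_order_smul {f : 𝕜 → E} {p : FormalMultilinearSeries 𝕜 𝕜 E}
    {z₀ : 𝕜} (hp : HasFPowerSeriesAt f p z₀) (h : p ≠ 0) :
    ∃ u : 𝕜 → E, ContinuousAt u z₀ ∧ u z₀ ≠ 0 ∧ ∀ z, f z = (z - z₀) ^ p.order • u z :=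
  ⟨_, (hp.has_fpower_series_iterate_dslope_fslope p.order).continuousAt,
    hp.iterate_dslope_fslope_ne_zero h, hp.eq_pow_order_mul_iterate_dslope⟩

end

theorem eventually_mul_neg_of_eq_pow_mul {g u : ℝ → ℝ} {k : ℕ} (hk : Odd k)
    (hu : ContinuousAt u 0) (hu0 : u 0 ≠ 0) (hg : ∀ z, g z = z ^ k * u z) :
    ∀ᶠ t in 𝓝[>] 0, g (-t) * g t < 0 := by
  have hsign : ∀ᶠ z in 𝓝 0, 0 < u z * u 0 :=
    (hu.mul continuousAt_const).eventually (lt_mem_nhds (mul_self_pos.mpr hu0))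
  have hsign' : ∀ᶠ t in 𝓝 0, 0 < u (-t) * u 0 :=
    (continuous_neg.tendsto' 0 0 neg_zero).eventually hsign
  filter_upwards [nhdsWithin_le_nhds (hsign.and hsign'), self_mem_nhdsWithin]
    with t ⟨hpos, hneg⟩ (ht : 0 < t)
  have huu : 0 < u (-t) * u t := by nlinarith [mul_pos hpos hneg, mul_self_pos.mpr hu0]
  rw [hg, hg, hk.neg_pow]
  nlinarith [mul_pos (pow_pos (pow_pos ht k) 2) huu]

theorem eventually_exists_zero_of_mul_neg {X : Type*} [TopologicalSpace X] {F : X × ℝ → ℝ}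
    {x₀ : X} {a b : ℝ} (hab : a ≤ b)
    (hcont : ∀ᶠ x in 𝓝 x₀, ∀ y ∈ Icc a b, ContinuousAt F (x, y))
    (hsign : F (x₀, a) * F (x₀, b) < 0) :
    ∀ᶠ x in 𝓝 x₀, ∃ y ∈ Icc a b, F (x, y) = 0 := by
  have hcont_fibre (y : ℝ) (hy : y ∈ Icc a b) : ContinuousAt (fun x => F (x, y)) x₀ :=
    ContinuousAt.comp (f := fun x => (x, y)) (hcont.self_of_nhds y hy)
      (Continuous.prodMk_left y).continuousAt
  have hends : ∀ᶠ x in 𝓝 x₀, F (x, a) * F (x, b) < 0 :=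
    ((hcont_fibre a (left_mem_Icc.mpr hab)).mul (hcont_fibre b (right_mem_Icc.mpr hab))).eventually
      (gt_mem_nhds hsign)
  filter_upwards [hcont, hends] with x hx hneg
  have hcx : ContinuousOn (fun y => F (x, y)) (uIcc a b) := by
    rw [uIcc_of_le hab]
    exact fun y hy => (ContinuousAt.comp (f := fun y => (x, y)) (hx y hy)
      (Continuous.prodMk_right x).continuousAt).continuousWithinAt
  have hzero : (0 : ℝ) ∈ uIcc (F (x, a)) (F (x, b)) := by
    rcases mul_neg_iff.mp hneg with ⟨h1, h2⟩ | ⟨h1, h2⟩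
    · exact mem_uIcc.mpr (Or.inr ⟨h2.le, h1.le⟩)
    · exact mem_uIcc.mpr (Or.inl ⟨h1.le, h2.le⟩)
  obtain ⟨y, hy, hy0⟩ := intermediate_value_uIcc hcx hzero
  exact ⟨y, uIcc_of_le hab ▸ hy, hy0⟩

theorem odd_multiplicity_real_solution_general (F : ℝ × ℝ → ℝ)
    (hF : AnalyticAt ℝ F (0, 0))
    (hodd : ∃ (p : FormalMultilinearSeries ℝ ℝ ℝ) (k : ℕ),
      HasFPowerSeriesAt (fun y => F (0, y)) p 0 ∧ Odd k ∧ p.coeff k ≠ 0 ∧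
      ∀ j < k, p.coeff j = 0) :
    ∀ ε > (0 : ℝ), ∃ δ > (0 : ℝ), ∀ x : ℝ, |x| < δ →
      ∃ y : ℝ, |y| < ε ∧ F (x, y) = 0 := by
  intro ε hε
  obtain ⟨p, k, hp, hk, hck, hlow⟩ := hodd
  have hp0 : p ≠ 0 := fun h => hck (by simp [h, FormalMultilinearSeries.coeff])
  obtain ⟨u, hu, hu0, hfac⟩ := hp.exists_eq_pow_order_smul hp0
  rw [FormalMultilinearSeries.order_eq_of_coeff hck hlow] at hfac
  have hcont : ∀ᶠ q in 𝓝 (0 : ℝ) ×ˢ 𝓝 (0 : ℝ), ContinuousAt F q := by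
    rw [← nhds_prod_eq]
    exact hF.eventually_analyticAt.mono fun _ h => h.continuousAt
  obtain ⟨pX, hpX, pY, hpY, hXY⟩ := eventually_prod_iff.mp hcont
  obtain ⟨r, hr, hball⟩ := Metric.eventually_nhds_iff.mp hpY
  obtain ⟨t, hsign, ht⟩ := ((eventually_mul_neg_of_eq_pow_mul hk hu hu0
    (by simpa using hfac)).and (Ioo_mem_nhdsGT (lt_min hε hr))).exists
  have hfibres : ∀ᶠ x in 𝓝 0, ∀ y ∈ Icc (-t) t, ContinuousAt F (x, y) :=
    hpX.mono fun x hx y hy => hXY hx <| hball <| by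
      rw [Real.dist_0_eq_abs]
      exact (abs_le.mpr hy).trans_lt (ht.2.trans_le (min_le_right _ _))
  have hroots := eventually_exists_zero_of_mul_neg (neg_le_self ht.1.le) hfibres hsign
  obtain ⟨δ, hδ, hδP⟩ := Metric.eventually_nhds_iff.mp hroots
  refine ⟨δ, hδ, fun x hx => ?_⟩
  obtain ⟨y, hy, hy0⟩ := hδP (by rwa [Real.dist_0_eq_abs])
  exact ⟨y, (abs_le.mpr hy).trans_lt (ht.2.trans_le (min_le_left _ _)), hy0⟩

/-- Poincaré's continuity method: if the order of vanishing of `y ↦ F(0, y)` at `0` is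
finite and odd, then for every small real `x` the equation `F(x, y) = 0` has a small
real solution `y`. -/
theorem odd_multiplicity_real_solution (F : ℝ × ℝ → ℝ)
    (hF : AnalyticAt ℝ F (0, 0)) (hF0 : F (0, 0) = 0)
    (hodd : ∃ (p : FormalMultilinearSeries ℝ ℝ ℝ) (k : ℕ),
      HasFPowerSeriesAt (fun y => F (0, y)) p 0 ∧ Odd k ∧ p.coeff k ≠ 0 ∧
      ∀ j < k, p.coeff j = 0) :
    ∀ ε > (0 : ℝ), ∃ δ > (0 : ℝ), ∀ x : ℝ, |x| < δ →
      ∃ y : ℝ, |y| < ε ∧ F (x, y) = 0 :=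
  odd_multiplicity_real_solution_general F hF hodd
end

section
/- Let n ≥ 1 and let π be a permutation of {1, …, n}. Then π is separable if and only if the inversion graph of π contains no induced path on four vertices, i.e. there are no four distinct vertices a, b, c, d such that ab, bc, cd are edges of the inversion graph while ac, ad, bd are not. -/
/-- The inversion graph (permutation graph) of a permutation `π` of `{1, …, n}`:
distinct `i` and `j` are adjacent exactly when `π` reverses their order. -/
def inversionGraph {n : ℕ} (π : Equiv.Perm (Fin n)) : SimpleGraph (Fin n) where
  Adj i j := (i < j ∧ π j < π i) ∨ (j < i ∧ π i < π j)
  symm := by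
    constructor
    intro i j h
    rcases h with ⟨h1, h2⟩ | ⟨h1, h2⟩
    · exact Or.inr ⟨h1, h2⟩
    · exact Or.inl ⟨h1, h2⟩
  loopless := by
    constructor
    intro i h
    rcases h with ⟨h1, _⟩ | ⟨h1, _⟩ <;> exact lt_irrefl _ h1

lemma adj_of {n : ℕ} (π : Equiv.Perm (Fin n)) {i j : Fin n} (h1 : i < j)
    (h2 : π j < π i) : (inversionGraph π).Adj i j := Or.inl ⟨h1, h2⟩

lemma not_adj_of {n : ℕ} (π : Equiv.Perm (Fin n)) {i j : Fin n} (h1 : i < j)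
    (h2 : π i < π j) : ¬ (inversionGraph π).Adj i j := by
  rintro (⟨h3, h4⟩ | ⟨h3, h4⟩)
  · exact absurd h4 (lt_asymm h2)
  · exact absurd h3 (lt_asymm h1)

lemma nonadj_cases {n : ℕ} (π : Equiv.Perm (Fin n)) {x y : Fin n} (hxy : x ≠ y)
    (h : ¬ (inversionGraph π).Adj x y) :
    (x < y ∧ π x < π y) ∨ (y < x ∧ π y < π x) := by
  have hv : π x ≠ π y := fun he => hxy (π.injective he)
  rcases hxy.lt_or_gt with h1 | h1
  · refine Or.inl ⟨h1, ?_⟩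
    rcases hv.lt_or_gt with h2 | h2
    · exact h2
    · exact absurd (Or.inl ⟨h1, h2⟩) h
  · refine Or.inr ⟨h1, ?_⟩
    rcases hv.lt_or_gt with h2 | h2
    · exact absurd (Or.inr ⟨h1, h2⟩) h
    · exact h2

/-- A permutation is separable if and only if its inversion graph contains no
induced path on four vertices. -/
theorem separable_iff_inversionGraph_P4_free (n : ℕ) (hn : 1 ≤ n)
    (π : Equiv.Perm (Fin n)) :
    (¬ ∃ i₁ i₂ i₃ i₄ : Fin n, i₁ < i₂ ∧ i₂ < i₃ ∧ i₃ < i₄ ∧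
        ((π i₂ < π i₄ ∧ π i₄ < π i₁ ∧ π i₁ < π i₃) ∨
         (π i₃ < π i₁ ∧ π i₁ < π i₄ ∧ π i₄ < π i₂))) ↔
      ¬ ∃ a b c d : Fin n, a ≠ b ∧ a ≠ c ∧ a ≠ d ∧ b ≠ c ∧ b ≠ d ∧ c ≠ d ∧
        (inversionGraph π).Adj a b ∧ (inversionGraph π).Adj b c ∧
        (inversionGraph π).Adj c d ∧
        ¬ (inversionGraph π).Adj a c ∧ ¬ (inversionGraph π).Adj a d ∧
        ¬ (inversionGraph π).Adj b d := by
  refine not_congr ?_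
  constructor
  · rintro ⟨i₁, i₂, i₃, i₄, h12, h23, h34, ⟨hv1, hv2, hv3⟩ | ⟨hv1, hv2, hv3⟩⟩
    · exact ⟨i₂, i₁, i₄, i₃, h12.ne', (lt_trans h23 h34).ne, h23.ne,
        (lt_trans h12 (lt_trans h23 h34)).ne, (lt_trans h12 h23).ne, h34.ne',
        (adj_of π h12 (lt_trans hv1 hv2)).symm,
        adj_of π (lt_trans h12 (lt_trans h23 h34)) hv2,
        (adj_of π h34 (lt_trans hv2 hv3)).symm,
        not_adj_of π (lt_trans h23 h34) hv1,
        not_adj_of π h23 (lt_trans hv1 (lt_trans hv2 hv3)),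
        not_adj_of π (lt_trans h12 h23) hv3⟩
    · exact ⟨i₁, i₃, i₂, i₄, (lt_trans h12 h23).ne, h12.ne,
        (lt_trans h12 (lt_trans h23 h34)).ne, h23.ne', h34.ne, (lt_trans h23 h34).ne,
        adj_of π (lt_trans h12 h23) hv1,
        (adj_of π h23 (lt_trans hv1 (lt_trans hv2 hv3))).symm,
        adj_of π (lt_trans h23 h34) hv3,
        not_adj_of π h12 (lt_trans hv2 hv3),
        not_adj_of π (lt_trans h12 (lt_trans h23 h34)) hv2,
        not_adj_of π h34 (lt_trans hv1 hv2)⟩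
  · rintro ⟨a, b, c, d, hab, hac, had, hbc, hbd, hcd, eab, ebc, ecd, nac, nad, nbd⟩
    rcases eab with ⟨hab1, hab2⟩ | ⟨hab1, hab2⟩ <;>
    rcases ebc with ⟨hbc1, hbc2⟩ | ⟨hbc1, hbc2⟩ <;>
    rcases ecd with ⟨hcd1, hcd2⟩ | ⟨hcd1, hcd2⟩ <;>
    rcases nonadj_cases π hac nac with ⟨hac1, hac2⟩ | ⟨hac1, hac2⟩ <;>
    rcases nonadj_cases π had nad with ⟨had1, had2⟩ | ⟨had1, had2⟩ <;>
    rcases nonadj_cases π hbd nbd with ⟨hbd1, hbd2⟩ | ⟨hbd1, hbd2⟩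
    · exact absurd (lt_trans hac2 hbc2) (lt_asymm hab2)
    · exact absurd (lt_trans hbc1 hcd1) (lt_asymm hbd1)
    · exact absurd (lt_trans hab1 hbd1) (lt_asymm had1)
    · exact absurd (lt_trans hac1 hcd1) (lt_asymm had1)
    · exact absurd (lt_trans hab1 hbc1) (lt_asymm hac1)
    · exact absurd (lt_trans hab1 hbc1) (lt_asymm hac1)
    · exact absurd (lt_trans hab1 hbc1) (lt_asymm hac1)
    · exact absurd (lt_trans hab1 hbc1) (lt_asymm hac1)
    · exact absurd (lt_trans hac2 hbc2) (lt_asymm hab2)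
    · exact absurd (lt_trans hac2 hbc2) (lt_asymm hab2)
    · exact absurd (lt_trans hab1 hbd1) (lt_asymm had1)
    · exact absurd (lt_trans hac2 hbc2) (lt_asymm hab2)
    · exact absurd (lt_trans hab1 hbc1) (lt_asymm hac1)
    · exact absurd (lt_trans hab1 hbc1) (lt_asymm hac1)
    · exact absurd (lt_trans hab1 hbc1) (lt_asymm hac1)
    · exact absurd (lt_trans hab1 hbc1) (lt_asymm hac1)
    · exact ⟨a,c,b,d,hac1,hbc1,hbd1,Or.inr ⟨hab2,had2,hcd2⟩⟩
    · exact absurd (lt_trans had2 hbd2) (lt_asymm hab2)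
    · exact absurd (lt_trans hab1 hbd1) (lt_asymm had1)
    · exact absurd (lt_trans hac1 hcd1) (lt_asymm had1)
    · exact absurd (lt_trans had2 hcd2) (lt_asymm hac2)
    · exact absurd (lt_trans had2 hbd2) (lt_asymm hab2)
    · exact absurd (lt_trans hab1 hbd1) (lt_asymm had1)
    · exact ⟨c,d,a,b,hcd1,had1,hab1,Or.inl ⟨hbd2,hbc2,hac2⟩⟩
    · exact absurd (lt_trans hbd1 hcd1) (lt_asymm hbc1)
    · exact absurd (lt_trans had2 hbd2) (lt_asymm hab2)
    · exact absurd (lt_trans hab1 hbd1) (lt_asymm had1)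
    · exact absurd (lt_trans hac2 hcd2) (lt_asymm had2)
    · exact absurd (lt_trans had1 hcd1) (lt_asymm hac1)
    · exact absurd (lt_trans had1 hcd1) (lt_asymm hac1)
    · exact absurd (lt_trans hab1 hbd1) (lt_asymm had1)
    · exact absurd (lt_trans hbc2 hcd2) (lt_asymm hbd2)
    · exact absurd (lt_trans hbd2 hcd2) (lt_asymm hbc2)
    · exact absurd (lt_trans had1 hbd1) (lt_asymm hab1)
    · exact absurd (lt_trans hac1 hcd1) (lt_asymm had1)
    · exact absurd (lt_trans hac1 hcd1) (lt_asymm had1)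
    · exact absurd (lt_trans had2 hcd2) (lt_asymm hac2)
    · exact absurd (lt_trans had1 hbd1) (lt_asymm hab1)
    · exact absurd (lt_trans hab2 hbd2) (lt_asymm had2)
    · exact absurd (lt_trans hbc1 hcd1) (lt_asymm hbd1)
    · exact ⟨b,a,d,c,hab1,had1,hcd1,Or.inl ⟨hac2,hbc2,hbd2⟩⟩
    · exact absurd (lt_trans had1 hbd1) (lt_asymm hab1)
    · exact absurd (lt_trans hab2 hbd2) (lt_asymm had2)
    · exact absurd (lt_trans hac2 hcd2) (lt_asymm had2)
    · exact absurd (lt_trans had1 hcd1) (lt_asymm hac1)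
    · exact absurd (lt_trans had1 hbd1) (lt_asymm hab1)
    · exact absurd (lt_trans hab2 hbd2) (lt_asymm had2)
    · exact ⟨d,b,c,a,hbd1,hbc1,hac1,Or.inr ⟨hcd2,had2,hab2⟩⟩
    · exact absurd (lt_trans hac1 hbc1) (lt_asymm hab1)
    · exact absurd (lt_trans hac1 hbc1) (lt_asymm hab1)
    · exact absurd (lt_trans hac1 hbc1) (lt_asymm hab1)
    · exact absurd (lt_trans hac1 hbc1) (lt_asymm hab1)
    · exact absurd (lt_trans hab2 hbc2) (lt_asymm hac2)
    · exact absurd (lt_trans had1 hbd1) (lt_asymm hab1)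
    · exact absurd (lt_trans hab2 hbc2) (lt_asymm hac2)
    · exact absurd (lt_trans hab2 hbc2) (lt_asymm hac2)
    · exact absurd (lt_trans hac1 hbc1) (lt_asymm hab1)
    · exact absurd (lt_trans hac1 hbc1) (lt_asymm hab1)
    · exact absurd (lt_trans hac1 hbc1) (lt_asymm hab1)
    · exact absurd (lt_trans hac1 hbc1) (lt_asymm hab1)
    · exact absurd (lt_trans had1 hcd1) (lt_asymm hac1)
    · exact absurd (lt_trans had1 hbd1) (lt_asymm hab1)
    · exact absurd (lt_trans hbd1 hcd1) (lt_asymm hbc1)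
    · exact absurd (lt_trans hab2 hbc2) (lt_asymm hac2)
end
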